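/- arXiv:2404.03851 — 4 statements merged into one kernel-verified Lean document; each statement's English description precedes it below -/
import Mathlib

section
/- Let a, k be integers with 0 ≤ a ≤ k. (i) For every n ≥ 2: 𝒞^{(n)}_{(a, 0^{n−1}, k−a)}(z, q) = Σ_{i=0}^{a} Σ_{j=0}^{k−a} (zq)^{i+j} · 𝒟^{(n+1)}_{(i, a−i, 0^{n−2}, k−a−j, j)}(zq, q), where the 𝒟-subscript is the (n+2)-tuple with i in position 0, a−i in position 1, k−a−j in position n, and j in position n+1; for n = 1 the same holds with the 𝒟-subscript interpreted as (i, k−i−j, j). (ii) For every n ≥ 1: 𝒟^{(n+1)}_{(a, 0^{n}, k−a)}(z, q) = 𝒞^{(n)}_{(a, 0^{n−1}, k−a)}(zq, q). -/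
noncomputable section

/-- The weight (sum of parts) of a coloured partition given by its multiplicity
function `f`, where `f (i, c)` is the number of parts equal to `i` of colour `c`. -/
def wt (f : ℕ × ℕ →₀ ℕ) : ℕ := f.sum fun p v => p.1 * v

/-- The length (number of parts) of a coloured partition. -/
def len (f : ℕ × ℕ →₀ ℕ) : ℕ := f.sum fun _ v => v

/-- `f` is a type-`C` coloured partition for rank `n`: parts are at least `1`, colours
lie in `{1, …, 2n+1}`, and parts of colour `c` have the same parity as `c`
(i.e. `fᵢ⁽ᶜ⁾ = 0` unless `i + c` is even). -/
def IsCPC (n : ℕ) (f : ℕ × ℕ →₀ ℕ) : Prop :=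
  ∀ p ∈ f.support, 1 ≤ p.1 ∧ 1 ≤ p.2 ∧ p.2 ≤ 2 * n + 1 ∧ (p.1 + p.2) % 2 = 0

/-- The extended frequencies of a type-`C` coloured partition, with boundary conditions
`f₋₁⁽²ᶜ⁺¹⁾ = k c` (for `0 ≤ c ≤ n`) and `f₀⁽²ᶜ⁾ = 0`. -/
def fextC (k : ℕ → ℕ) (f : ℕ × ℕ →₀ ℕ) (i : ℤ) (c : ℕ) : ℕ :=
  if i = -1 then (if c % 2 = 1 then k ((c - 1) / 2) else 0) else f (i.toNat, c)

/-- Membership in the set `𝒞_{k₀,…,kₙ}`: `f` is a type-`C` coloured partition and every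
path — a sequence of integers `p 0, …, p (2n)` with `p j ≥ -1`, `p j + j + 1` even
(entry `j` is read in colour `j + 1`) and `|p (j+1) - p j| = 1` — has total weight at
most `k₀ + ⋯ + kₙ`. -/
def MemC (n : ℕ) (k : ℕ → ℕ) (f : ℕ × ℕ →₀ ℕ) : Prop :=
  IsCPC n f ∧
  ∀ p : ℕ → ℤ,
    (∀ j < 2 * n + 1, -1 ≤ p j ∧ (p j + (j : ℤ) + 1) % 2 = 0) →
    (∀ j, j + 1 < 2 * n + 1 → |p (j + 1) - p j| = 1) →
    ∑ j ∈ Finset.range (2 * n + 1), fextC k f (p j) (j + 1) ≤ ∑ c ∈ Finset.range (n + 1), k c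

/-- `f` is a type-`D` coloured partition for rank `n`: parts are at least `1`, colours
lie in `{1, …, 2n−1}`, and `fᵢ⁽ᶜ⁾ = 0` unless `i + c` is odd. -/
def IsCPD (n : ℕ) (f : ℕ × ℕ →₀ ℕ) : Prop :=
  ∀ p ∈ f.support, 1 ≤ p.1 ∧ 1 ≤ p.2 ∧ p.2 ≤ 2 * n - 1 ∧ (p.1 + p.2) % 2 = 1

/-- The extended frequencies of a type-`D` coloured partition, with boundary conditions
`f₋₁⁽²ᶜ⁾ = k c` (for `1 ≤ c ≤ n−1`), `f₀⁽¹⁾ = k 0`, `f₀⁽²ⁿ⁻¹⁾ = k n` and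
`f₀⁽²ᶜ⁻¹⁾ = 0` otherwise. -/
def fextD (n : ℕ) (k : ℕ → ℕ) (f : ℕ × ℕ →₀ ℕ) (i : ℤ) (c : ℕ) : ℕ :=
  if i = -1 then (if c % 2 = 0 then k (c / 2) else 0)
  else if i = 0 then (if c = 1 then k 0 else if c = 2 * n - 1 then k n else 0)
  else f (i.toNat, c)

/-- Membership in the set `𝒟_{k₀,…,kₙ}`: `f` is a type-`D` coloured partition and every
path — a sequence of integers `p 0, …, p (2n-2)` with `p j ≥ -1`, `p j + j + 1` odd
(entry `j` is read in colour `j + 1`) and `|p (j+1) - p j| = 1` — has total weight at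
most `k₀ + ⋯ + kₙ`. -/
def MemD (n : ℕ) (k : ℕ → ℕ) (f : ℕ × ℕ →₀ ℕ) : Prop :=
  IsCPD n f ∧
  ∀ p : ℕ → ℤ,
    (∀ j < 2 * n - 1, -1 ≤ p j ∧ (p j + (j : ℤ) + 1) % 2 = 1) →
    (∀ j, j + 1 < 2 * n - 1 → |p (j + 1) - p j| = 1) →
    ∑ j ∈ Finset.range (2 * n - 1), fextD n k f (p j) (j + 1) ≤ ∑ c ∈ Finset.range (n + 1), k c

/-- The two-variable generating function `𝒞⁽ⁿ⁾_{(k₀,…,kₙ)}(z,q)`, a power series in the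
outer variable `z` with coefficients power series in `q`: the coefficient of `zˡ qᴺ` is
the number of partitions in `𝒞_{k₀,…,kₙ}` with `l(λ) = l` and `|λ| = N`. -/
def CGF (n : ℕ) (k : ℕ → ℕ) : PowerSeries (PowerSeries ℚ) :=
  PowerSeries.mk fun l => PowerSeries.mk fun N =>
    (Nat.card {f : ℕ × ℕ →₀ ℕ // MemC n k f ∧ len f = l ∧ wt f = N} : ℚ)

/-- The two-variable generating function `𝒟⁽ⁿ⁾_{(k₀,…,kₙ)}(z,q)`. -/
def DGF (n : ℕ) (k : ℕ → ℕ) : PowerSeries (PowerSeries ℚ) :=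
  PowerSeries.mk fun l => PowerSeries.mk fun N =>
    (Nat.card {f : ℕ × ℕ →₀ ℕ // MemD n k f ∧ len f = l ∧ wt f = N} : ℚ)

/-- The substitution `z ↦ z qᶜ` on a two-variable series. -/
def zsub (c : ℕ) (F : PowerSeries (PowerSeries ℚ)) : PowerSeries (PowerSeries ℚ) :=
  PowerSeries.mk fun l =>
    (PowerSeries.X : PowerSeries ℚ) ^ (c * l) * PowerSeries.coeff l F

/-- The variable `z`. -/
def Zv : PowerSeries (PowerSeries ℚ) := PowerSeries.X

/-- The variable `q`. -/
def Qv : PowerSeries (PowerSeries ℚ) := PowerSeries.C PowerSeries.X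


/-!
Both identities come from lowering parts by one, which lowers `|λ|` by `l(λ)`. Lowering a type-`D`
path of rank `n + 1` by one level gives a type-`C` path of rank `n` once a visit to level `-2` is
reflected to level `0`. Under this shift the type-`D` boundary `f₀⁽¹⁾ = a`, `f₀⁽²ⁿ⁺¹⁾ = k − a`
becomes the type-`C` boundary at level `-1`, and a reflected visit only loses the type-`D`
boundary at level `-1`, which vanishes for `(a, 0ⁿ, k − a)`. Zigzag paths along the two lowest
levels with a single peak show that partitions in `𝒟_{(a,0ⁿ,k−a)}` have no parts `1`, and that
those in `𝒞_{(a,0^{n−1},k−a)}` have parts `1` only in colours `1` and `2n + 1`, at most `a`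
resp. `k − a` of them. This gives (ii).

For (i), remove the `i` resp. `j` parts `1` of colours `1` and `2n + 1` and lower the other parts.
Level by level, the boundary conditions of `𝒞_{(a,0^{n−1},k−a)}` and `𝒟_{(i,a−i,0^{n−2},k−a−j,j)}`
then agree up to moving `a − i` from the cell `(−1, 1)` to `(0, 2)` and `k − a − j` from
`(−1, 2n + 1)` to `(0, 2n)`, cells being (level of the type-`C` partition, colour). A type-`C`
path through `(−1, 1)` continues through `(0, 2)`, and every type-`D` path is the lowering of a
type-`C` path that visits `(0, 2)` only after `(−1, 1)`, so the two path conditions correspond.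
-/

namespace ColouredPartition

open Finset

def shiftUp (f : ℕ × ℕ →₀ ℕ) : ℕ × ℕ →₀ ℕ :=
  Finsupp.embDomain ⟨fun p => (p.1 + 1, p.2), fun p q h => by simpa [Prod.ext_iff] using h⟩ f

def shiftDown (g : ℕ × ℕ →₀ ℕ) : ℕ × ℕ →₀ ℕ :=
  Finsupp.comapDomain (fun p : ℕ × ℕ => (p.1 + 1, p.2)) g
    (fun p _ q _ h => by simpa [Prod.ext_iff] using h)

@[simp] lemma shiftUp_apply_succ (f : ℕ × ℕ →₀ ℕ) (m c : ℕ) : shiftUp f (m + 1, c) = f (m, c) :=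
  Finsupp.embDomain_apply_self _ f (m, c)

@[simp] lemma shiftUp_apply_zero (f : ℕ × ℕ →₀ ℕ) (c : ℕ) : shiftUp f (0, c) = 0 :=
  Finsupp.embDomain_of_notMem_range _ _ _ (by simp [Prod.ext_iff])

@[simp] lemma shiftDown_apply (g : ℕ × ℕ →₀ ℕ) (m c : ℕ) : shiftDown g (m, c) = g (m + 1, c) :=
  rfl

lemma shiftDown_shiftUp (f : ℕ × ℕ →₀ ℕ) : shiftDown (shiftUp f) = f := by
  ext ⟨m, c⟩; simp

lemma shiftUp_shiftDown {g : ℕ × ℕ →₀ ℕ} (hg : ∀ c, g (0, c) = 0) :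
    shiftUp (shiftDown g) = g := by
  ext ⟨_ | m, c⟩ <;> simp [hg]

lemma len_add (f g : ℕ × ℕ →₀ ℕ) : len (f + g) = len f + len g :=
  Finsupp.sum_add_index' (fun _ => rfl) (fun _ _ _ => rfl)

lemma wt_add (f g : ℕ × ℕ →₀ ℕ) : wt (f + g) = wt f + wt g :=
  Finsupp.sum_add_index' (fun _ => mul_zero _) (fun _ _ _ => mul_add _ _ _)

lemma len_single (p : ℕ × ℕ) (v : ℕ) : len (Finsupp.single p v) = v :=
  Finsupp.sum_single_index rfl

lemma wt_single (p : ℕ × ℕ) (v : ℕ) : wt (Finsupp.single p v) = p.1 * v :=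
  Finsupp.sum_single_index (mul_zero _)

lemma len_shiftUp (f : ℕ × ℕ →₀ ℕ) : len (shiftUp f) = len f :=
  Finsupp.sum_embDomain

lemma wt_shiftUp (f : ℕ × ℕ →₀ ℕ) : wt (shiftUp f) = wt f + len f := by
  rw [wt, shiftUp, Finsupp.sum_embDomain, wt, len, ← Finsupp.sum_add]
  exact Finsupp.sum_congr fun p _ => add_one_mul p.1 (f p)

lemma apply_le_wt (f : ℕ × ℕ →₀ ℕ) {p : ℕ × ℕ} (hp : 1 ≤ p.1) : f p ≤ wt f := by
  by_cases h : f p = 0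
  · simp [h]
  · exact (Nat.le_mul_of_pos_left _ hp).trans
      (single_le_sum (f := fun q => q.1 * f q) (fun _ _ => Nat.zero_le _)
        (Finsupp.mem_support_iff.2 h))

lemma fst_le_wt (f : ℕ × ℕ →₀ ℕ) {p : ℕ × ℕ} (hp : f p ≠ 0) : p.1 ≤ wt f :=
  (Nat.le_mul_of_pos_right _ (Nat.pos_of_ne_zero hp)).trans
    (single_le_sum (f := fun q => q.1 * f q) (fun _ _ => Nat.zero_le _)
      (Finsupp.mem_support_iff.2 hp))

lemma finite_setOf_wt_eq (M N : ℕ) :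
    {f : ℕ × ℕ →₀ ℕ | (∀ p ∈ f.support, 1 ≤ p.1 ∧ p.2 ≤ M) ∧ wt f = N}.Finite := by
  refine ((range (N + 1) ×ˢ range (M + 1)).finsupp fun _ => range (N + 1)).finite_toSet.subset ?_
  rintro f ⟨hf, rfl⟩
  refine mem_coe.2 (mem_finsupp_iff.2 ⟨fun p hp => ?_, fun p _ => ?_⟩)
  · have := fst_le_wt f (Finsupp.mem_support_iff.1 hp)
    have := hf p hp
    simp only [mem_product, mem_range]
    omega
  · by_cases h : f p = 0
    · simp [h]
    · exact mem_range.2 (Nat.lt_succ_of_le (apply_le_wt f (hf p (Finsupp.mem_support_iff.2 h)).1))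

lemma finite_memC (n : ℕ) (k : ℕ → ℕ) (N : ℕ) : {f | MemC n k f ∧ wt f = N}.Finite :=
  (finite_setOf_wt_eq (2 * n + 1) N).subset fun _ ⟨hf, hN⟩ =>
    ⟨fun p hp => ⟨(hf.1 p hp).1, (hf.1 p hp).2.2.1⟩, hN⟩

lemma finite_memD (n : ℕ) (k : ℕ → ℕ) (N : ℕ) : {g | MemD n k g ∧ wt g = N}.Finite :=
  (finite_setOf_wt_eq (2 * n - 1) N).subset fun _ ⟨hg, hN⟩ =>
    ⟨fun p hp => ⟨(hg.1 p hp).1, (hg.1 p hp).2.2.1⟩, hN⟩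

lemma IsCPC.apply_zero {n : ℕ} {f : ℕ × ℕ →₀ ℕ} (hf : IsCPC n f) (c : ℕ) : f (0, c) = 0 := by
  by_contra h
  have := hf (0, c) (Finsupp.mem_support_iff.2 h)
  omega

lemma IsCPD.apply_zero {n : ℕ} {g : ℕ × ℕ →₀ ℕ} (hg : IsCPD n g) (c : ℕ) : g (0, c) = 0 := by
  by_contra h
  have := hg (0, c) (Finsupp.mem_support_iff.2 h)
  omega

def genFun (S : (ℕ × ℕ →₀ ℕ) → Prop) : PowerSeries (PowerSeries ℚ) :=
  PowerSeries.mk fun l => PowerSeries.mk fun N =>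
    (Nat.card {f : ℕ × ℕ →₀ ℕ // S f ∧ len f = l ∧ wt f = N} : ℚ)

lemma coeff_coeff_genFun (S : (ℕ × ℕ →₀ ℕ) → Prop) (l N : ℕ) :
    PowerSeries.coeff N (PowerSeries.coeff l (genFun S)) =
      Nat.card {f : ℕ × ℕ →₀ ℕ // S f ∧ len f = l ∧ wt f = N} := by
  simp [genFun]

lemma coeff_coeff_zq_pow_mul_zsub (m : ℕ) (G : PowerSeries (PowerSeries ℚ)) (l N : ℕ) :
    PowerSeries.coeff N (PowerSeries.coeff l ((Zv * Qv) ^ m * zsub 1 G)) =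
      if m ≤ l ∧ l ≤ N then PowerSeries.coeff (N - l) (PowerSeries.coeff (l - m) G) else 0 := by
  have hmul : (Zv * Qv) ^ m * zsub 1 G =
      PowerSeries.C (PowerSeries.X ^ m) * (PowerSeries.X ^ m * zsub 1 G) := by
    rw [Zv, Qv, mul_pow, ← map_pow]
    ring
  rw [hmul, PowerSeries.coeff_C_mul, PowerSeries.coeff_X_pow_mul' (zsub 1 G) m l]
  by_cases hml : m ≤ l
  · rw [if_pos hml, zsub, PowerSeries.coeff_mk, one_mul, ← mul_assoc, ← pow_add,
      Nat.add_sub_cancel' hml, PowerSeries.coeff_X_pow_mul']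
    by_cases hlN : l ≤ N <;> simp [hml, hlN]
  · simp [hml]

def sigmaSubtypeEquiv {ι : Type*} {β : ι → Type*} (Q : (Σ s, β s) → Prop) :
    {x : Σ s, β s // Q x} ≃ Σ s, {b : β s // Q ⟨s, b⟩} where
  toFun x := ⟨x.1.1, x.1.2, x.2⟩
  invFun y := ⟨⟨y.1, y.2.1⟩, y.2.2⟩

theorem genFun_eq_sum_of_equiv {ι : Type*} [Fintype ι] {S : (ℕ × ℕ →₀ ℕ) → Prop}
    {T : ι → (ℕ × ℕ →₀ ℕ) → Prop} (d : ι → ℕ) (hT : ∀ s N, {μ | T s μ ∧ wt μ = N}.Finite)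
    (e : (Σ s, {μ // T s μ}) ≃ {f // S f})
    (he : ∀ x, len (e x).1 = len x.2.1 + d x.1 ∧ wt (e x).1 = wt x.2.1 + len x.2.1 + d x.1) :
    genFun S = ∑ s, (Zv * Qv) ^ d s * zsub 1 (genFun (T s)) := by
  ext l N
  simp only [map_sum, coeff_coeff_zq_pow_mul_zsub, coeff_coeff_genFun]
  let P (s : ι) (μ : ℕ × ℕ →₀ ℕ) : Prop := len μ + d s = l ∧ wt μ + len μ + d s = N
  have hsplit : {f // S f ∧ len f = l ∧ wt f = N} ≃ Σ s, {μ : {μ // T s μ} // P s μ} :=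
    (Equiv.subtypeSubtypeEquivSubtypeInter S _).symm.trans <|
      (e.subtypeEquiv fun x => by rw [(he x).1, (he x).2]).symm.trans (sigmaSubtypeEquiv _)
  have hfin (s : ι) : Finite {μ : {μ // T s μ} // P s μ} :=
    have := (hT s (N - l)).to_subtype
    Finite.of_injective (β := {μ | T s μ ∧ wt μ = N - l})
      (fun μ => ⟨μ.1.1, μ.1.2, by obtain ⟨hl, hN⟩ := μ.2; omega⟩)
      fun _ _ h => Subtype.ext (Subtype.ext (Subtype.mk.inj h))
  rw [Nat.card_congr hsplit, Nat.card_sigma]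
  push_cast
  refine sum_congr rfl fun s _ => ?_
  rw [Nat.card_congr (Equiv.subtypeSubtypeEquivSubtypeInter (T s) (P s))]
  split_ifs with h
  · refine congrArg _ <| Nat.card_congr <|
      Equiv.subtypeEquivRight fun _ => and_congr_right fun _ => ?_
    constructor <;> rintro ⟨h1, h2⟩ <;> constructor <;> omega
  · have : IsEmpty {μ // T s μ ∧ P s μ} := ⟨fun ⟨_, _, hl, hN⟩ => h ⟨by omega, by omega⟩⟩
    simp

/-- `e = 0` gives the type-`C` paths of rank `n` and `e = 1` the type-`D` paths of rank `n + 1`;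
both have `2n + 1` entries, entry `j` being read in colour `j + 1`. -/
def IsPath (n : ℕ) (e : ℤ) (p : ℕ → ℤ) : Prop :=
  (∀ j < 2 * n + 1, -1 ≤ p j ∧ (p j + (j : ℤ) + 1) % 2 = e) ∧
    ∀ j, j + 1 < 2 * n + 1 → |p (j + 1) - p j| = 1

def pathWeight (n : ℕ) (E : ℤ → ℕ → ℕ) (p : ℕ → ℤ) : ℕ :=
  ∑ j ∈ range (2 * n + 1), E (p j) (j + 1)

lemma memC_iff {n : ℕ} {k : ℕ → ℕ} {f : ℕ × ℕ →₀ ℕ} :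
    MemC n k f ↔ IsCPC n f ∧
      ∀ p, IsPath n 0 p → pathWeight n (fextC k f) p ≤ ∑ c ∈ range (n + 1), k c := by
  simp only [MemC, IsPath, pathWeight, and_imp]

lemma memD_succ_iff {n : ℕ} {k : ℕ → ℕ} {f : ℕ × ℕ →₀ ℕ} :
    MemD (n + 1) k f ↔ IsCPD (n + 1) f ∧
      ∀ p, IsPath n 1 p → pathWeight n (fextD (n + 1) k f) p ≤ ∑ c ∈ range (n + 2), k c := by
  simp only [MemD, IsPath, pathWeight, and_imp, show 2 * (n + 1) - 1 = 2 * n + 1 by omega]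

def lowerLevel (z : ℤ) : ℤ := if z = -1 then 0 else z - 1

lemma lowerLevel_neg_one : lowerLevel (-1) = 0 := if_pos rfl

lemma lowerLevel_of_ne {z : ℤ} (hz : z ≠ -1) : lowerLevel z = z - 1 := if_neg hz

/-- A right inverse of `lowerLevel` on type-`D` paths; an end drops to `-1` when its neighbour is
at `-1`, so that the lifted path visits `(0, 2)` and `(0, 2n)` only from `(-1, 1)` resp.
`(-1, 2n + 1)`. -/
def liftEnds (n : ℕ) (p : ℕ → ℤ) (t : ℕ) : ℤ :=
  if t = 0 ∧ p 1 = -1 ∨ t = 2 * n ∧ p (2 * n - 1) = -1 then -1 else p t + 1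

/-- The zigzag along levels `-1` and `0` with a single peak at level `1` in position `s`. -/
def bumpPath (e : ℤ) (s t : ℕ) : ℤ := if t = s then 1 else -(((t : ℤ) + e + 1) % 2)

def cell (z₀ : ℤ) (c₀ x : ℕ) (z : ℤ) (c : ℕ) : ℕ := if z = z₀ ∧ c = c₀ then x else 0

section Paths

variable {n : ℕ} {e e' : ℤ} {p : ℕ → ℤ}

lemma IsPath.step (h : IsPath n e p) {j : ℕ} (hj : j + 1 < 2 * n + 1) :
    p (j + 1) = p j + 1 ∨ p (j + 1) = p j - 1 := by
  have := h.2 j hj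
  rw [abs_eq zero_le_one] at this
  omega

lemma isPath_of_steps
    (hval : ∀ j < 2 * n + 1, -1 ≤ p j ∧ (p j + (j : ℤ) + 1) % 2 = e)
    (hstep : ∀ j, j + 1 < 2 * n + 1 → p (j + 1) = p j + 1 ∨ p (j + 1) = p j - 1) :
    IsPath n e p :=
  ⟨hval, fun j hj => by have := hstep j hj; rw [abs_eq zero_le_one]; omega⟩

lemma IsPath.succ_eq_zero_of_eq_neg_one (h : IsPath n e p) {j : ℕ} (hj : j + 1 < 2 * n + 1)
    (hp : p j = -1) : p (j + 1) = 0 := by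
  have := h.step hj
  have := (h.1 (j + 1) hj).1
  omega

lemma IsPath.eq_zero_of_succ_eq_neg_one (h : IsPath n e p) {j : ℕ} (hj : j + 1 < 2 * n + 1)
    (hp : p (j + 1) = -1) : p j = 0 := by
  have := h.step hj
  have := (h.1 j (by omega)).1
  omega

lemma IsPath.lowerLevel (h : IsPath n e p) (he : e + e' = 1) :
    IsPath n e' (fun t => lowerLevel (p t)) := by
  refine isPath_of_steps (fun j hj => ?_) (fun j hj => ?_)
  · have := h.1 j hj
    unfold ColouredPartition.lowerLevel
    split_ifs <;> omega
  · have := h.step hj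
    have := (h.1 j (by omega)).1
    have := (h.1 (j + 1) hj).1
    unfold ColouredPartition.lowerLevel
    split_ifs <;> omega

lemma IsPath.add_one (h : IsPath n e p) (he : e + e' = 1) : IsPath n e' (fun t => p t + 1) := by
  refine isPath_of_steps (fun j hj => ?_) (fun j hj => ?_)
  · have := h.1 j hj
    omega
  · have := h.step hj
    omega

lemma liftEnds_of_ne {t : ℕ} (h0 : t ≠ 0) (h1 : t ≠ 2 * n) : liftEnds n p t = p t + 1 :=
  if_neg (by omega)

lemma liftEnds_zero (hn : n ≠ 0) : liftEnds n p 0 = if p 1 = -1 then -1 else p 0 + 1 := by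
  simp only [liftEnds, true_and]
  split_ifs <;> omega

lemma liftEnds_two_mul (hn : n ≠ 0) :
    liftEnds n p (2 * n) = if p (2 * n - 1) = -1 then -1 else p (2 * n) + 1 := by
  simp only [liftEnds, true_and]
  split_ifs <;> omega

lemma liftEnds_zero_of_one (hn : n ≠ 0) (h : liftEnds n p 1 = 0) : liftEnds n p 0 = -1 := by
  rw [liftEnds_of_ne one_ne_zero (by omega)] at h
  rw [liftEnds_zero hn, if_pos (by omega)]

lemma liftEnds_two_mul_of_sub_one (hn : n ≠ 0) (h : liftEnds n p (2 * n - 1) = 0) :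
    liftEnds n p (2 * n) = -1 := by
  rw [liftEnds_of_ne (by omega) (by omega)] at h
  rw [liftEnds_two_mul hn, if_pos (by omega)]

lemma IsPath.liftEnds (hn : n ≠ 0) (h : IsPath n 1 p) : IsPath n 0 (liftEnds n p) := by
  refine isPath_of_steps (fun j hj => ?_) (fun j hj => ?_)
  · have := h.1 j hj
    unfold ColouredPartition.liftEnds
    split_ifs <;> omega
  · have hs := h.step hj
    rcases Nat.eq_zero_or_pos j with rfl | hj0
    · rw [liftEnds_zero hn, liftEnds_of_ne (by omega) (by omega)]
      simp only [zero_add] at hs ⊢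
      split_ifs <;> omega
    · by_cases hj1 : j + 1 = 2 * n
      · obtain rfl : j = 2 * n - 1 := by omega
        rw [hj1, liftEnds_two_mul hn, liftEnds_of_ne (by omega) (by omega)]
        rw [hj1] at hs
        split_ifs <;> omega
      · rw [liftEnds_of_ne (by omega) hj1, liftEnds_of_ne (by omega) (by omega)]
        omega

lemma lowerLevel_liftEnds (hn : n ≠ 0) (h : IsPath n 1 p) {t : ℕ} (ht : t < 2 * n + 1) :
    lowerLevel (liftEnds n p t) = p t := by
  have := h.1 t ht
  by_cases h0 : t = 0
  · subst h0
    have := h.step (j := 0) (by omega)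
    rw [liftEnds_zero hn, lowerLevel]
    simp only [zero_add] at this
    split_ifs <;> omega
  by_cases h1 : t = 2 * n
  · subst h1
    have := h.step (j := 2 * n - 1) (by omega)
    rw [Nat.sub_add_cancel (by omega)] at this
    rw [liftEnds_two_mul hn, lowerLevel]
    split_ifs <;> omega
  rw [liftEnds_of_ne h0 h1, lowerLevel_of_ne (by omega), add_sub_cancel_right]

lemma isPath_bumpPath (he : e = 0 ∨ e = 1) {s : ℕ} (hs : ((s : ℤ) + e) % 2 = 0) :
    IsPath n e (bumpPath e s) := by
  refine isPath_of_steps (fun j hj => ?_) (fun j hj => ?_) <;> unfold bumpPath <;>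
    split_ifs <;> omega

lemma cell_self (z₀ : ℤ) (c₀ x c : ℕ) : cell z₀ c₀ x z₀ c = if c = c₀ then x else 0 := by
  simp [cell]

lemma cell_of_ne {z₀ z : ℤ} (h : z ≠ z₀) (c₀ x c : ℕ) : cell z₀ c₀ x z c = 0 :=
  if_neg fun h' => h h'.1

lemma pathWeight_cell {z₀ : ℤ} {c₀ : ℕ} (x : ℕ) (h1 : 1 ≤ c₀) (h2 : c₀ ≤ 2 * n + 1) :
    pathWeight n (cell z₀ c₀ x) p = if p (c₀ - 1) = z₀ then x else 0 := by
  rw [pathWeight, sum_eq_single (c₀ - 1)]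
  · simp [cell, Nat.sub_add_cancel h1]
  · intro t _ ht
    exact if_neg (by omega)
  · intro h
    simp at h
    omega

lemma pathWeight_add (E F : ℤ → ℕ → ℕ) (p : ℕ → ℤ) :
    pathWeight n (E + F) p = pathWeight n E p + pathWeight n F p :=
  sum_add_distrib

lemma pathWeight_le_pathWeight {E F : ℤ → ℕ → ℕ} {q : ℕ → ℤ}
    (h : ∀ t < 2 * n + 1, E (p t) (t + 1) ≤ F (q t) (t + 1)) :
    pathWeight n E p ≤ pathWeight n F q :=
  sum_le_sum fun t ht => h t (mem_range.1 ht)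

lemma pathWeight_congr {E F : ℤ → ℕ → ℕ} {q : ℕ → ℤ}
    (h : ∀ t < 2 * n + 1, E (p t) (t + 1) = F (q t) (t + 1)) :
    pathWeight n E p = pathWeight n F q :=
  sum_congr rfl fun t ht => h t (mem_range.1 ht)

end Paths

section ExtendedFrequencies

variable {n : ℕ} {k : ℕ → ℕ} {f : ℕ × ℕ →₀ ℕ} {c : ℕ}

lemma fextC_neg_one : fextC k f (-1) c = if c % 2 = 1 then k ((c - 1) / 2) else 0 := if_pos rfl

lemma fextC_of_nonneg {z : ℤ} (hz : 0 ≤ z) : fextC k f z c = f (z.toNat, c) :=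
  if_neg (by omega)

lemma fextD_neg_one : fextD n k f (-1) c = if c % 2 = 0 then k (c / 2) else 0 := if_pos rfl

lemma fextD_zero : fextD n k f 0 c = if c = 1 then k 0 else if c = 2 * n - 1 then k n else 0 := by
  simp [fextD]

lemma fextD_of_pos {z : ℤ} (hz : 0 < z) : fextD n k f z c = f (z.toNat, c) := by
  rw [fextD, if_neg (by omega), if_neg (by omega)]

end ExtendedFrequencies

-- The tuples `(a, 0^{n−1}, k−a)`, `(a, 0ⁿ, k−a)` and `(i, a−i, 0^{n−2}, k−a−j, j)`.
def kC (a k n t : ℕ) : ℕ := if t = 0 then a else if t = n then k - a else 0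

def kD (a k n t : ℕ) : ℕ := if t = 0 then a else if t = n + 1 then k - a else 0

def kDSplit (a k n i j t : ℕ) : ℕ :=
  (if t = 0 then i else 0) + (if t = 1 then a - i else 0) +
    (if t = n then k - a - j else 0) + (if t = n + 1 then j else 0)

section Boundary

variable {a k n i j : ℕ}

lemma sum_kC (hn : n ≠ 0) : ∑ t ∈ range (n + 1), kC a k n t = a + (k - a) := by
  have : ∀ t, kC a k n t = (if t = 0 then a else 0) + (if t = n then k - a else 0) := by
    intro t; unfold kC; split_ifs <;> omega
  simp [this, sum_add_distrib]

lemma sum_kD : ∑ t ∈ range (n + 2), kD a k n t = a + (k - a) := by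
  have : ∀ t, kD a k n t = (if t = 0 then a else 0) + (if t = n + 1 then k - a else 0) := by
    intro t; unfold kD; split_ifs <;> omega
  simp [this, sum_add_distrib]

lemma sum_kDSplit (hi : i ≤ a) (hj : j ≤ k - a) :
    ∑ t ∈ range (n + 2), kDSplit a k n i j t = a + (k - a) := by
  simp only [kDSplit, sum_add_distrib, sum_ite_eq', mem_range]
  split_ifs <;> omega

lemma fextC_kC_neg_one (hn : n ≠ 0) (f : ℕ × ℕ →₀ ℕ) {c : ℕ} (hc1 : 1 ≤ c)
    (hc2 : c ≤ 2 * n + 1) :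
    fextC (kC a k n) f (-1) c =
      (if c = 1 then a else 0) + (if c = 2 * n + 1 then k - a else 0) := by
  simp only [fextC_neg_one, kC]
  split_ifs <;> omega

lemma fextD_kD_zero (hn : n ≠ 0) (g : ℕ × ℕ →₀ ℕ) (c : ℕ) :
    fextD (n + 1) (kD a k n) g 0 c =
      (if c = 1 then a else 0) + (if c = 2 * n + 1 then k - a else 0) := by
  simp only [fextD_zero, kD, Nat.add_one_ne_zero, ↓reduceIte]
  split_ifs <;> omega

lemma fextD_kD_neg_one (g : ℕ × ℕ →₀ ℕ) {c : ℕ} (hc1 : 1 ≤ c) (hc2 : c ≤ 2 * n + 1) :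
    fextD (n + 1) (kD a k n) g (-1) c = 0 := by
  simp only [fextD_neg_one, kD]
  split_ifs <;> omega

lemma fextD_kDSplit_zero (hn : n ≠ 0) (μ : ℕ × ℕ →₀ ℕ) (c : ℕ) :
    fextD (n + 1) (kDSplit a k n i j) μ 0 c =
      (if c = 1 then i else 0) + (if c = 2 * n + 1 then j else 0) := by
  have h0 : kDSplit a k n i j 0 = i := by simp [kDSplit, Ne.symm hn]
  have h1 : kDSplit a k n i j (n + 1) = j := by simp [kDSplit, hn]
  rw [fextD_zero, h0, show 2 * (n + 1) - 1 = 2 * n + 1 by omega, h1]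
  split_ifs <;> omega

lemma fextD_kDSplit_neg_one (μ : ℕ × ℕ →₀ ℕ) {c : ℕ} (hc1 : 1 ≤ c) (hc2 : c ≤ 2 * n + 1) :
    fextD (n + 1) (kDSplit a k n i j) μ (-1) c =
      (if c = 2 then a - i else 0) + (if c = 2 * n then k - a - j else 0) := by
  simp only [fextD_neg_one, kDSplit]
  split_ifs <;> omega

end Boundary

section LevelOne

variable {a k n : ℕ}

lemma cells_le_fextC_kC (hn : n ≠ 0) (f : ℕ × ℕ →₀ ℕ) (c₀ : ℕ) :
    cell (-1) 1 a + cell (-1) (2 * n + 1) (k - a) + cell 1 c₀ (f (1, c₀)) ≤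
      fextC (kC a k n) f := by
  intro z c
  simp only [Pi.add_apply]
  rcases (show z = -1 ∨ z = 1 ∨ z ≠ -1 ∧ z ≠ 1 by omega) with rfl | rfl | ⟨h1, h2⟩
  · rw [cell_self, cell_self, cell_of_ne (by norm_num), fextC_neg_one, kC]
    split_ifs <;> omega
  · rw [cell_of_ne (by norm_num), cell_of_ne (by norm_num), cell_self,
      fextC_of_nonneg zero_le_one, Int.toNat_one]
    split_ifs with h <;> simp [h]
  · rw [cell_of_ne h1, cell_of_ne h1, cell_of_ne h2]
    exact Nat.zero_le _

lemma cells_le_fextD_kD (hn : n ≠ 0) (g : ℕ × ℕ →₀ ℕ) (c₀ : ℕ) :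
    cell 0 1 a + cell 0 (2 * n + 1) (k - a) + cell 1 c₀ (g (1, c₀)) ≤
      fextD (n + 1) (kD a k n) g := by
  intro z c
  simp only [Pi.add_apply]
  rcases (show z = 0 ∨ z = 1 ∨ z ≠ 0 ∧ z ≠ 1 by omega) with rfl | rfl | ⟨h1, h2⟩
  · rw [cell_self, cell_self, cell_of_ne (by norm_num), fextD_kD_zero hn]
    omega
  · rw [cell_of_ne (by norm_num), cell_of_ne (by norm_num), cell_self,
      fextD_of_pos zero_lt_one, Int.toNat_one]
    split_ifs with h <;> simp [h]
  · rw [cell_of_ne h1, cell_of_ne h1, cell_of_ne h2]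
    exact Nat.zero_le _

lemma MemC.apply_one_add_le (hn : n ≠ 0) {f : ℕ × ℕ →₀ ℕ} (hf : MemC n (kC a k n) f) {c : ℕ}
    (hc : c % 2 = 1) (hc2 : c ≤ 2 * n + 1) :
    f (1, c) + (if c = 1 then 0 else a) + (if c = 2 * n + 1 then 0 else k - a) ≤ a + (k - a) := by
  have hp : IsPath n 0 (bumpPath 0 (c - 1)) := isPath_bumpPath (by norm_num) (by omega)
  have := (pathWeight_le_pathWeight fun t _ => cells_le_fextC_kC hn f c _ _).trans
    ((memC_iff.1 hf).2 _ hp)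
  rw [sum_kC hn, pathWeight_add, pathWeight_add, pathWeight_cell _ le_rfl (by omega),
    pathWeight_cell _ (by omega) le_rfl, pathWeight_cell _ (by omega) hc2] at this
  simp only [bumpPath, Nat.sub_self, Nat.add_sub_cancel] at this
  split_ifs at this ⊢ <;> omega

lemma MemC.apply_one_eq_zero (hn : n ≠ 0) {f : ℕ × ℕ →₀ ℕ} (hf : MemC n (kC a k n) f) {c : ℕ}
    (h1 : c ≠ 1) (h2 : c ≠ 2 * n + 1) : f (1, c) = 0 := by
  by_contra h
  have := hf.1 (1, c) (Finsupp.mem_support_iff.2 h)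
  have := MemC.apply_one_add_le hn hf (c := c) (by omega) (by omega)
  rw [if_neg h1, if_neg h2] at this
  omega

lemma MemC.apply_one_one_le (hn : n ≠ 0) {f : ℕ × ℕ →₀ ℕ} (hf : MemC n (kC a k n) f) :
    f (1, 1) ≤ a := by
  have := MemC.apply_one_add_le hn hf (c := 1) rfl (by omega)
  rw [if_pos rfl, if_neg (by omega)] at this
  omega

lemma MemC.apply_one_two_mul_add_one_le (hn : n ≠ 0) {f : ℕ × ℕ →₀ ℕ}
    (hf : MemC n (kC a k n) f) : f (1, 2 * n + 1) ≤ k - a := by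
  have := MemC.apply_one_add_le hn hf (c := 2 * n + 1) (by omega) le_rfl
  rw [if_neg (by omega), if_pos rfl] at this
  omega

lemma MemD.apply_one_eq_zero (hn : n ≠ 0) {g : ℕ × ℕ →₀ ℕ} (hg : MemD (n + 1) (kD a k n) g)
    (c : ℕ) : g (1, c) = 0 := by
  by_contra h
  have hc := hg.1 (1, c) (Finsupp.mem_support_iff.2 h)
  simp only at hc
  have hp : IsPath n 1 (bumpPath 1 (c - 1)) := isPath_bumpPath (by norm_num) (by omega)
  have := (pathWeight_le_pathWeight fun t _ => cells_le_fextD_kD hn g c _ _).trans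
    ((memD_succ_iff.1 hg).2 _ hp)
  rw [sum_kD, pathWeight_add, pathWeight_add, pathWeight_cell _ le_rfl (by omega),
    pathWeight_cell _ (by omega) le_rfl, pathWeight_cell _ (by omega) (by omega)] at this
  simp only [bumpPath, Nat.sub_self, Nat.add_sub_cancel] at this
  split_ifs at this <;> omega

end LevelOne

section Shift

variable {a k n : ℕ}

lemma fextC_kC_eq_fextD_kD_shiftUp (f : ℕ × ℕ →₀ ℕ) {z : ℤ} (hz : -1 ≤ z) {c : ℕ}
    (hc1 : 1 ≤ c) (hc2 : c ≤ 2 * n + 1) :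
    fextC (kC a k n) f z c = fextD (n + 1) (kD a k n) (shiftUp f) (z + 1) c := by
  by_cases hz1 : z = -1
  · subst hz1
    simp only [fextC_neg_one, neg_add_cancel, fextD_zero, kC, kD, Nat.add_one_ne_zero,
      ↓reduceIte]
    split_ifs <;> omega
  · rw [fextC_of_nonneg (by omega), fextD_of_pos (by omega),
      show (z + 1).toNat = z.toNat + 1 by omega, shiftUp_apply_succ]

lemma memD_shiftUp (hn : n ≠ 0) {f : ℕ × ℕ →₀ ℕ} (hf : MemC n (kC a k n) f) :
    MemD (n + 1) (kD a k n) (shiftUp f) := by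
  rw [memC_iff] at hf
  refine memD_succ_iff.2 ⟨?_, fun p hp => ?_⟩
  · rintro ⟨_ | m, c⟩ h <;> rw [Finsupp.mem_support_iff] at h
    · exact absurd (shiftUp_apply_zero f c) h
    · rw [shiftUp_apply_succ] at h
      have := hf.1 (m, c) (Finsupp.mem_support_iff.2 h)
      simp only at this ⊢
      omega
  · rw [sum_kD, ← sum_kC hn]
    refine (pathWeight_le_pathWeight fun t ht => ?_).trans (hf.2 _ (hp.lowerLevel (by norm_num)))
    have := (hp.1 t ht).1
    by_cases h : p t = -1
    · rw [h, fextD_kD_neg_one _ (by omega) (by omega)]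
      exact Nat.zero_le _
    · rw [lowerLevel_of_ne h, fextC_kC_eq_fextD_kD_shiftUp _ (by omega) (by omega) (by omega),
        sub_add_cancel]

lemma memC_shiftDown (hn : n ≠ 0) {g : ℕ × ℕ →₀ ℕ} (hg : MemD (n + 1) (kD a k n) g) :
    MemC n (kC a k n) (shiftDown g) := by
  have hg1 := MemD.apply_one_eq_zero hn hg
  have hg0 := IsCPD.apply_zero hg.1
  rw [memD_succ_iff] at hg
  refine memC_iff.2 ⟨fun ⟨m, c⟩ h => ?_, fun q hq => ?_⟩
  · rw [Finsupp.mem_support_iff, shiftDown_apply] at h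
    have := hg.1 (m + 1, c) (Finsupp.mem_support_iff.2 h)
    have : m ≠ 0 := by rintro rfl; exact h (hg1 c)
    simp only at *
    omega
  · rw [sum_kC hn, ← sum_kD]
    refine le_of_eq_of_le (pathWeight_congr fun t ht => ?_) (hg.2 _ (hq.add_one (by norm_num)))
    rw [fextC_kC_eq_fextD_kD_shiftUp _ (hq.1 t ht).1 (by omega) (by omega), shiftUp_shiftDown hg0]

theorem DGF_kD_eq_zsub_CGF_kC (hn : n ≠ 0) :
    DGF (n + 1) (kD a k n) = zsub 1 (CGF n (kC a k n)) := by
  let e : (Σ _ : Unit, {f // MemC n (kC a k n) f}) ≃ {g // MemD (n + 1) (kD a k n) g} :=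
    { toFun := fun x => ⟨shiftUp x.2, memD_shiftUp hn x.2.2⟩
      invFun := fun g => ⟨(), shiftDown g, memC_shiftDown hn g.2⟩
      left_inv := fun x => Sigma.subtype_ext rfl (shiftDown_shiftUp _)
      right_inv := fun g => Subtype.ext (shiftUp_shiftDown (IsCPD.apply_zero g.2.1)) }
  have := genFun_eq_sum_of_equiv (fun _ => 0) (fun _ => finite_memC n _) e
    fun x => ⟨len_shiftUp _, wt_shiftUp _⟩
  rwa [Fintype.sum_unique, pow_zero, one_mul] at this

end Shift

def addOnes (n i j : ℕ) (μ : ℕ × ℕ →₀ ℕ) : ℕ × ℕ →₀ ℕ :=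
  shiftUp μ + Finsupp.single (1, 1) i + Finsupp.single (1, 2 * n + 1) j

def stripOnes (f : ℕ × ℕ →₀ ℕ) : ℕ × ℕ →₀ ℕ := shiftUp (shiftDown (shiftDown f))

section Split

variable {a k n i j : ℕ} {μ : ℕ × ℕ →₀ ℕ}

@[simp] lemma addOnes_apply_zero (c : ℕ) : addOnes n i j μ (0, c) = 0 := by
  simp [addOnes]

lemma addOnes_apply_one (c : ℕ) :
    addOnes n i j μ (1, c) =
      μ (0, c) + (if c = 1 then i else 0) + (if c = 2 * n + 1 then j else 0) := by
  simp [addOnes, Finsupp.single_apply, eq_comm]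

@[simp] lemma addOnes_apply_add_two (m c : ℕ) : addOnes n i j μ (m + 2, c) = μ (m + 1, c) := by
  simp [addOnes]

lemma addOnes_apply_one_one (hn : n ≠ 0) (hμ : ∀ c, μ (0, c) = 0) :
    addOnes n i j μ (1, 1) = i := by
  simp [addOnes_apply_one, hμ, hn]

lemma addOnes_apply_one_two_mul_add_one (hn : n ≠ 0) (hμ : ∀ c, μ (0, c) = 0) :
    addOnes n i j μ (1, 2 * n + 1) = j := by
  simp [addOnes_apply_one, hμ, hn]

lemma len_addOnes : len (addOnes n i j μ) = len μ + (i + j) := by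
  simp [addOnes, len_add, len_shiftUp, len_single, add_assoc]

lemma wt_addOnes : wt (addOnes n i j μ) = wt μ + len μ + (i + j) := by
  simp [addOnes, wt_add, wt_shiftUp, wt_single, add_assoc]

@[simp] lemma stripOnes_apply_zero (f : ℕ × ℕ →₀ ℕ) (c : ℕ) : stripOnes f (0, c) = 0 :=
  shiftUp_apply_zero _ c

lemma stripOnes_addOnes (hμ : ∀ c, μ (0, c) = 0) : stripOnes (addOnes n i j μ) = μ := by
  ext ⟨_ | m, c⟩ <;> simp [stripOnes, hμ]

lemma addOnes_stripOnes (hn : n ≠ 0) {f : ℕ × ℕ →₀ ℕ} (h0 : ∀ c, f (0, c) = 0)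
    (h1 : ∀ c, c ≠ 1 → c ≠ 2 * n + 1 → f (1, c) = 0) :
    addOnes n (f (1, 1)) (f (1, 2 * n + 1)) (stripOnes f) = f := by
  ext ⟨_ | _ | m, c⟩
  · simp [h0]
  · rw [addOnes_apply_one, stripOnes_apply_zero, zero_add]
    by_cases hc1 : c = 1
    · subst hc1; simp [hn]
    by_cases hc2 : c = 2 * n + 1
    · subst hc2; simp [hn]
    · simp [hc1, hc2, h1 c hc1 hc2]
  · simp [stripOnes]

lemma fextC_addOnes_add_cells (hn : n ≠ 0) (hi : i ≤ a) (hj : j ≤ k - a)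
    (hμ : ∀ c, μ (0, c) = 0) {z : ℤ} (hz : -1 ≤ z) {c : ℕ} (hc1 : 1 ≤ c) (hc2 : c ≤ 2 * n + 1) :
    fextC (kC a k n) (addOnes n i j μ) z c +
        (cell 0 2 (a - i) z c + cell 0 (2 * n) (k - a - j) z c) =
      fextD (n + 1) (kDSplit a k n i j) μ (lowerLevel z) c +
        (cell (-1) 1 (a - i) z c + cell (-1) (2 * n + 1) (k - a - j) z c) := by
  rcases (show z = -1 ∨ z = 0 ∨ z = 1 ∨ 2 ≤ z by omega) with rfl | rfl | rfl | hz2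
  · rw [fextC_kC_neg_one hn _ hc1 hc2, lowerLevel_neg_one, fextD_kDSplit_zero hn,
      cell_of_ne (by norm_num), cell_of_ne (by norm_num), cell_self, cell_self]
    split_ifs <;> omega
  · rw [fextC_of_nonneg le_rfl, Int.toNat_zero, addOnes_apply_zero,
      lowerLevel_of_ne (by norm_num), zero_sub, fextD_kDSplit_neg_one _ hc1 hc2, cell_self,
      cell_self, cell_of_ne (by norm_num), cell_of_ne (by norm_num)]
    split_ifs <;> omega
  · rw [fextC_of_nonneg zero_le_one, Int.toNat_one, addOnes_apply_one, hμ,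
      lowerLevel_of_ne (by norm_num), sub_self, fextD_kDSplit_zero hn,
      cell_of_ne one_ne_zero, cell_of_ne one_ne_zero, cell_of_ne (by norm_num),
      cell_of_ne (by norm_num)]
    omega
  · obtain ⟨m, rfl⟩ : ∃ m : ℕ, z = m + 2 := ⟨(z - 2).toNat, by omega⟩
    rw [lowerLevel_of_ne (by omega), fextC_of_nonneg (by omega), fextD_of_pos (by omega),
      show ((m : ℤ) + 2).toNat = m + 2 by omega, show ((m : ℤ) + 2 - 1).toNat = m + 1 by omega,
      addOnes_apply_add_two, cell_of_ne (by omega), cell_of_ne (by omega), cell_of_ne (by omega),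
      cell_of_ne (by omega)]

lemma pathWeight_addOnes_add (hn : n ≠ 0) (hi : i ≤ a) (hj : j ≤ k - a)
    (hμ : ∀ c, μ (0, c) = 0) {q : ℕ → ℤ} (hq : ∀ t < 2 * n + 1, -1 ≤ q t) :
    pathWeight n (fextC (kC a k n) (addOnes n i j μ)) q +
        ((if q 1 = 0 then a - i else 0) + (if q (2 * n - 1) = 0 then k - a - j else 0)) =
      pathWeight n (fextD (n + 1) (kDSplit a k n i j) μ) (fun t => lowerLevel (q t)) +
        ((if q 0 = -1 then a - i else 0) + (if q (2 * n) = -1 then k - a - j else 0)) := by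
  have := pathWeight_congr (n := n) (p := q) (q := q)
    (E := fextC (kC a k n) (addOnes n i j μ) + (cell 0 2 (a - i) + cell 0 (2 * n) (k - a - j)))
    (F := (fun z c => fextD (n + 1) (kDSplit a k n i j) μ (lowerLevel z) c) +
      (cell (-1) 1 (a - i) + cell (-1) (2 * n + 1) (k - a - j)))
    fun t ht => fextC_addOnes_add_cells hn hi hj hμ (hq t ht) (by omega) (by omega)
  rw [pathWeight_add, pathWeight_add, pathWeight_add, pathWeight_add,
    pathWeight_cell (c₀ := 2) _ (by omega) (by omega),
    pathWeight_cell (c₀ := 2 * n) _ (by omega) (by omega),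
    pathWeight_cell (c₀ := 1) _ le_rfl (by omega),
    pathWeight_cell (c₀ := 2 * n + 1) _ (by omega) le_rfl] at this
  simp only [Nat.add_sub_cancel, Nat.reduceSub] at this
  exact this

lemma memC_addOnes (hn : n ≠ 0) (hi : i ≤ a) (hj : j ≤ k - a)
    (hμ : MemD (n + 1) (kDSplit a k n i j) μ) : MemC n (kC a k n) (addOnes n i j μ) := by
  rw [memD_succ_iff] at hμ
  refine memC_iff.2 ⟨fun ⟨m, c⟩ h => ?_, fun q hq => ?_⟩
  · rw [Finsupp.mem_support_iff] at h
    rcases m with _ | _ | m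
    · exact absurd (addOnes_apply_zero c) h
    · rw [addOnes_apply_one, IsCPD.apply_zero hμ.1] at h
      simp only
      split_ifs at h <;> omega
    · rw [addOnes_apply_add_two] at h
      have := hμ.1 (m + 1, c) (Finsupp.mem_support_iff.2 h)
      simp only at this ⊢
      omega
  · have key := pathWeight_addOnes_add hn hi hj (IsCPD.apply_zero hμ.1) fun t ht => (hq.1 t ht).1
    have hD := hμ.2 _ (hq.lowerLevel (by norm_num))
    rw [sum_kDSplit hi hj] at hD
    rw [sum_kC hn]
    have hx : (if q 0 = -1 then a - i else 0) ≤ if q 1 = 0 then a - i else 0 := by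
      by_cases h : q 0 = -1 <;> simp [h, hq.succ_eq_zero_of_eq_neg_one (j := 0) (by omega)]
    have hy : (if q (2 * n) = -1 then k - a - j else 0) ≤
        if q (2 * n - 1) = 0 then k - a - j else 0 := by
      by_cases h : q (2 * n) = -1
      · have h' : q (2 * n - 1 + 1) = -1 := by rwa [Nat.sub_add_cancel (by omega)]
        simp [h, hq.eq_zero_of_succ_eq_neg_one (j := 2 * n - 1) (by omega) h']
      · simp [h]
    omega

lemma memD_of_memC_addOnes (hn : n ≠ 0) (hμ0 : ∀ c, μ (0, c) = 0)
    (h : MemC n (kC a k n) (addOnes n i j μ)) : MemD (n + 1) (kDSplit a k n i j) μ := by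
  have hi := MemC.apply_one_one_le hn h
  have hj := MemC.apply_one_two_mul_add_one_le hn h
  rw [addOnes_apply_one_one hn hμ0] at hi
  rw [addOnes_apply_one_two_mul_add_one hn hμ0] at hj
  rw [memC_iff] at h
  refine memD_succ_iff.2 ⟨fun ⟨m, c⟩ hm => ?_, fun p hp => ?_⟩
  · rw [Finsupp.mem_support_iff] at hm
    rcases m with _ | m
    · exact absurd (hμ0 c) hm
    · rw [← addOnes_apply_add_two (n := n) (i := i) (j := j)] at hm
      have := h.1 (m + 2, c) (Finsupp.mem_support_iff.2 hm)
      simp only at this ⊢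
      omega
  · have hq := hp.liftEnds hn
    have key := pathWeight_addOnes_add hn hi hj hμ0 fun t ht => (hq.1 t ht).1
    have hC := h.2 _ hq
    rw [sum_kC hn] at hC
    rw [sum_kDSplit hi hj,
      ← pathWeight_congr fun t ht => congrArg₂ _ (lowerLevel_liftEnds hn hp ht) rfl]
    have hx : (if liftEnds n p 1 = 0 then a - i else 0) ≤
        if liftEnds n p 0 = -1 then a - i else 0 := by
      by_cases h : liftEnds n p 1 = 0 <;> simp [h, liftEnds_zero_of_one hn]
    have hy : (if liftEnds n p (2 * n - 1) = 0 then k - a - j else 0) ≤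
        if liftEnds n p (2 * n) = -1 then k - a - j else 0 := by
      by_cases h : liftEnds n p (2 * n - 1) = 0 <;> simp [h, liftEnds_two_mul_of_sub_one hn]
    omega

def levelOneEquiv (hn : n ≠ 0) :
    (Σ s : Fin (a + 1) × Fin (k - a + 1), {μ // MemD (n + 1) (kDSplit a k n s.1 s.2) μ}) ≃
      {f // MemC n (kC a k n) f} where
  toFun x := ⟨addOnes n x.1.1 x.1.2 x.2,
    memC_addOnes hn (Nat.lt_succ_iff.1 x.1.1.2) (Nat.lt_succ_iff.1 x.1.2.2) x.2.2⟩
  invFun f :=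
    have hf := addOnes_stripOnes hn (IsCPC.apply_zero f.2.1)
      fun _ => MemC.apply_one_eq_zero hn f.2
    ⟨(⟨f.1 (1, 1), Nat.lt_succ_of_le (MemC.apply_one_one_le hn f.2)⟩,
      ⟨f.1 (1, 2 * n + 1), Nat.lt_succ_of_le (MemC.apply_one_two_mul_add_one_le hn f.2)⟩),
      stripOnes f.1, memD_of_memC_addOnes hn (stripOnes_apply_zero _) (by rw [hf]; exact f.2)⟩
  left_inv x := by
    have hμ := IsCPD.apply_zero x.2.2.1
    exact Sigma.subtype_ext
      (Prod.ext (Fin.ext (addOnes_apply_one_one hn hμ))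
        (Fin.ext (addOnes_apply_one_two_mul_add_one hn hμ)))
      (stripOnes_addOnes hμ)
  right_inv f := Subtype.ext <|
    addOnes_stripOnes hn (IsCPC.apply_zero f.2.1) fun _ => MemC.apply_one_eq_zero hn f.2

theorem CGF_kC_eq_sum (hn : n ≠ 0) :
    CGF n (kC a k n) = ∑ i ∈ range (a + 1), ∑ j ∈ range (k - a + 1),
      (Zv * Qv) ^ (i + j) * zsub 1 (DGF (n + 1) (kDSplit a k n i j)) := by
  have := genFun_eq_sum_of_equiv (fun s : Fin (a + 1) × Fin (k - a + 1) => (s.1 : ℕ) + s.2)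
    (fun _ => finite_memD (n + 1) _) (levelOneEquiv hn) fun _ => ⟨len_addOnes, wt_addOnes⟩
  rw [Fintype.sum_prod_type] at this
  simp_rw [sum_range]
  exact this

end Split

end ColouredPartition

theorem cmpp_CD_functional_equations_general (a k : ℕ) :
    (∀ n : ℕ, 1 ≤ n →
      CGF n (fun t => if t = 0 then a else if t = n then k - a else 0) =
        ∑ i ∈ Finset.range (a + 1), ∑ j ∈ Finset.range (k - a + 1),
          (Zv * Qv) ^ (i + j) *
            zsub 1 (DGF (n + 1) (fun t =>
              (if t = 0 then i else 0) + (if t = 1 then a - i else 0) +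
                (if t = n then k - a - j else 0) + (if t = n + 1 then j else 0)))) ∧
    (∀ n : ℕ, 1 ≤ n →
      DGF (n + 1) (fun t => if t = 0 then a else if t = n + 1 then k - a else 0) =
        zsub 1 (CGF n (fun t => if t = 0 then a else if t = n then k - a else 0))) :=
  ⟨fun _ hn => ColouredPartition.CGF_kC_eq_sum (Nat.one_le_iff_ne_zero.1 hn),
    fun _ hn => ColouredPartition.DGF_kD_eq_zsub_CGF_kC (Nat.one_le_iff_ne_zero.1 hn)⟩

/-- Proposition 4.3: for integers `0 ≤ a ≤ k`,
(i) for every `n ≥ 1`: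
`𝒞⁽ⁿ⁾_{(a,0^{n−1},k−a)}(z,q)
  = Σ_{i=0}^{a} Σ_{j=0}^{k−a} (zq)^{i+j} 𝒟⁽ⁿ⁺¹⁾_{(i,a−i,0^{n−2},k−a−j,j)}(zq,q)`
(the `𝒟`-tuple written additively, so that for `n = 1` it is `(i, k−i−j, j)`);
(ii) for every `n ≥ 1`:
`𝒟⁽ⁿ⁺¹⁾_{(a,0ⁿ,k−a)}(z,q) = 𝒞⁽ⁿ⁾_{(a,0^{n−1},k−a)}(zq,q)`. -/
theorem cmpp_CD_functional_equations (a k : ℕ) (hak : a ≤ k) :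
    (∀ n : ℕ, 1 ≤ n →
      CGF n (fun t => if t = 0 then a else if t = n then k - a else 0) =
        ∑ i ∈ Finset.range (a + 1), ∑ j ∈ Finset.range (k - a + 1),
          (Zv * Qv) ^ (i + j) *
            zsub 1 (DGF (n + 1) (fun t =>
              (if t = 0 then i else 0) + (if t = 1 then a - i else 0) +
                (if t = n then k - a - j else 0) + (if t = n + 1 then j else 0)))) ∧
    (∀ n : ℕ, 1 ≤ n →
      DGF (n + 1) (fun t => if t = 0 then a else if t = n + 1 then k - a else 0) =
        zsub 1 (CGF n (fun t => if t = 0 then a else if t = n then k - a else 0))) :=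
  cmpp_CD_functional_equations_general a k
end
end

section
/- Let k ≥ 1 be an integer. Suppose (F_{(k_0,k_1,k_2)}) and (G_{(k_0,k_1,k_2)}) are two families of formal power series in z and q, indexed by triples of nonnegative integers with k_0 + k_1 + k_2 = k, that both satisfy: (i) the symmetry H_{(k_0,k_1,k_2)}(z,q) = H_{(k_2,k_1,k_0)}(z,q); (ii) for all 0 ≤ a ≤ k: H_{(a,0,k−a)}(z,q) = Σ_{i=0}^{a} Σ_{j=0}^{k−a} (zq²)^{i+j} H_{(i,k−i−j,j)}(zq²,q); (iii) for all a, b ≥ 0 with a + b ≤ k−1: H_{(a,k−a−b,b)}(z,q) − H_{(a+1,k−a−b−1,b)}(z,q) = Σ_{i=0}^{a} Σ_{j=0}^{k−a} (zq)^{k+i−a+min(0,j−b)} q^{i+j} H_{(i,k−i−j,j)}(zq²,q); and (iv) the initial condition H_{(k_0,k_1,k_2)}(0,q) = 1 for every index. Then F_{(k_0,k_1,k_2)} = G_{(k_0,k_1,k_2)} for all indices. -/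
noncomputable section

/-- A family `H` indexed by triples of nonnegative integers summing to `k` satisfying:
(i) the symmetry `H (k₀,k₁,k₂) = H (k₂,k₁,k₀)`;
(ii) for `0 ≤ a ≤ k`:
`H (a,0,k−a) (z) = Σ_{i=0}^{a} Σ_{j=0}^{k−a} (zq²)^{i+j} H (i,k−i−j,j) (zq²)`;
(iii) for `a + b ≤ k − 1`:
`H (a,k−a−b,b) (z) − H (a+1,k−a−b−1,b) (z)
  = Σ_{i=0}^{a} Σ_{j=0}^{k−a} (zq)^{k+i−a+min(0,j−b)} q^{i+j} H (i,k−i−j,j) (zq²)`;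
(iv) the initial condition `H (k₀,k₁,k₂) (0,q) = 1`. -/
def SatisfiesD3System (k : ℕ) (H : ℕ → ℕ → ℕ → PowerSeries (PowerSeries ℚ)) : Prop :=
  (∀ k₀ k₁ k₂ : ℕ, k₀ + k₁ + k₂ = k → H k₀ k₁ k₂ = H k₂ k₁ k₀) ∧
  (∀ a : ℕ, a ≤ k →
    H a 0 (k - a) =
      ∑ i ∈ Finset.range (a + 1), ∑ j ∈ Finset.range (k - a + 1),
        (Zv * Qv ^ 2) ^ (i + j) * zsub 2 (H i (k - i - j) j)) ∧
  (∀ a b : ℕ, a + b + 1 ≤ k →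
    H a (k - a - b) b - H (a + 1) (k - a - b - 1) b =
      ∑ i ∈ Finset.range (a + 1), ∑ j ∈ Finset.range (k - a + 1),
        (Zv * Qv) ^ (k + i - a - (b - j)) * Qv ^ (i + j) * zsub 2 (H i (k - i - j) j)) ∧
  (∀ k₀ k₁ k₂ : ℕ, k₀ + k₁ + k₂ = k →
    PowerSeries.coeff 0 (H k₀ k₁ k₂) = 1)

/-!
Compare the coefficients of `zˡ` of two solutions by induction on `l`; let `D(k₀,k₁,k₂)` be the
difference of these coefficients, a series in `q`. Every term on the right of (iii) carries a
positive power of `z`, and every term on the right of (ii) except `(i,j) = (0,0)` does too, so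
once lower coefficients agree, (iii) says `D` is unchanged when `k₁` is moved into `k₀`, and (ii)
says `D(a,0,k-a) = q^{2l} D(0,k,0)`. Moving all of `(0,k,0)` to `(k,0,0)` gives
`D(0,k,0) = q^{2l} D(0,k,0)`, so `D(0,k,0) = 0` for `l ≠ 0` and hence `D = 0` everywhere;
for `l = 0` the initial conditions agree.
-/

open PowerSeries Finset

lemma PowerSeries.eq_zero_of_eq_X_pow_mul {R : Type*} [CommRing R] {n : ℕ} (hn : n ≠ 0)
    {f : R⟦X⟧} (h : f = X ^ n * f) : f = 0 := by
  have hunit : IsUnit (1 - X ^ n : R⟦X⟧) :=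
    isUnit_iff_constantCoeff.mpr (by simp [zero_pow hn])
  exact hunit.mul_right_eq_zero.mp (by linear_combination h)

lemma Finset.sum_range_sum_range_eq_zero_zero {M : Type*} [AddCommMonoid M] (s t : ℕ)
    (f : ℕ → ℕ → M) (h : ∀ i ≤ s, ∀ j ≤ t, i + j ≠ 0 → f i j = 0) :
    ∑ i ∈ range (s + 1), ∑ j ∈ range (t + 1), f i j = f 0 0 := by
  rw [sum_eq_single_of_mem 0 (by simp), sum_eq_single_of_mem 0 (by simp)]
  · intro j hj hj0
    exact h 0 (Nat.zero_le s) j (mem_range_succ_iff.mp hj) (by omega)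
  · intro i hi hi0
    exact sum_eq_zero fun j hj =>
      h i (mem_range_succ_iff.mp hi) j (mem_range_succ_iff.mp hj) (by omega)

lemma apply_eq_apply_of_shift_invariant {α : Type*} (k : ℕ) (D : ℕ → ℕ → ℕ → α)
    (hshift : ∀ a b, a + b + 1 ≤ k → D a (k - a - b) b = D (a + 1) (k - a - b - 1) b)
    {k₀ k₁ k₂ : ℕ} (hs : k₀ + k₁ + k₂ = k) : D k₀ k₁ k₂ = D (k - k₂) 0 k₂ := by
  induction k₁ generalizing k₀ with
  | zero => rw [show k₀ = k - k₂ by omega]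
  | succ k₁ ih =>
    have h := hshift k₀ k₂ (by omega)
    rw [show k - k₀ - k₂ = k₁ + 1 by omega, Nat.add_sub_cancel] at h
    rw [h]
    exact ih (by omega)

lemma coeff_zsub (c l : ℕ) (H : PowerSeries (PowerSeries ℚ)) :
    coeff l (zsub c H) = X ^ (c * l) * coeff l H := by
  simp [zsub]

lemma coeff_Zv_pow_mul_Qv_pow_mul_zsub (n e c l : ℕ) (H : PowerSeries (PowerSeries ℚ)) :
    coeff l (Zv ^ n * Qv ^ e * zsub c H) =
      if n ≤ l then X ^ e * (X ^ (c * (l - n)) * coeff (l - n) H) else 0 := by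
  rw [Zv, Qv, ← map_pow, mul_assoc, coeff_X_pow_mul']
  split_ifs
  · rw [coeff_C_mul, coeff_zsub]
  · rfl

lemma coeff_Zv_pow_mul_Qv_pow_mul_zsub_congr {n : ℕ} (hn : n ≠ 0) (e c l : ℕ)
    {H H' : PowerSeries (PowerSeries ℚ)} (h : ∀ l' < l, coeff l' H = coeff l' H') :
    coeff l (Zv ^ n * Qv ^ e * zsub c H) = coeff l (Zv ^ n * Qv ^ e * zsub c H') := by
  rw [coeff_Zv_pow_mul_Qv_pow_mul_zsub, coeff_Zv_pow_mul_Qv_pow_mul_zsub]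
  split_ifs
  · rw [h (l - n) (by omega)]
  · rfl

lemma Zv_mul_Qv_sq_pow (p : ℕ) : (Zv * Qv ^ 2) ^ p = Zv ^ p * Qv ^ (2 * p) := by
  rw [mul_pow, ← pow_mul, mul_comm 2 p]

lemma Zv_mul_Qv_pow_mul_Qv_pow (n m : ℕ) : (Zv * Qv) ^ n * Qv ^ m = Zv ^ n * Qv ^ (n + m) := by
  rw [mul_pow, pow_add, mul_assoc]

section InductionStep

variable {k l : ℕ} {F G : ℕ → ℕ → ℕ → PowerSeries (PowerSeries ℚ)}

lemma coeff_sub_coeff_shift (hF : SatisfiesD3System k F) (hG : SatisfiesD3System k G)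
    (hlow : ∀ l' < l, ∀ i m j, i + m + j = k → coeff l' (F i m j) = coeff l' (G i m j))
    {a b : ℕ} (hab : a + b + 1 ≤ k) :
    coeff l (F a (k - a - b) b) - coeff l (G a (k - a - b) b) =
      coeff l (F (a + 1) (k - a - b - 1) b) - coeff l (G (a + 1) (k - a - b - 1) b) := by
  rw [sub_eq_sub_iff_sub_eq_sub, ← map_sub, ← map_sub, hF.2.2.1 a b hab, hG.2.2.1 a b hab]
  simp only [map_sum]
  refine sum_congr rfl fun i hi => sum_congr rfl fun j hj => ?_
  rw [mem_range] at hi hj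
  rw [Zv_mul_Qv_pow_mul_Qv_pow]
  exact coeff_Zv_pow_mul_Qv_pow_mul_zsub_congr (by omega) _ _ _
    fun l' hl' => hlow l' hl' _ _ _ (by omega)

lemma coeff_sub_coeff_boundary (hF : SatisfiesD3System k F) (hG : SatisfiesD3System k G)
    (hlow : ∀ l' < l, ∀ i m j, i + m + j = k → coeff l' (F i m j) = coeff l' (G i m j))
    {a : ℕ} (ha : a ≤ k) :
    coeff l (F a 0 (k - a)) - coeff l (G a 0 (k - a)) =
      X ^ (2 * l) * (coeff l (F 0 k 0) - coeff l (G 0 k 0)) := by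
  rw [hF.2.1 a ha, hG.2.1 a ha]
  simp only [map_sum, ← sum_sub_distrib]
  rw [sum_range_sum_range_eq_zero_zero]
  · simp [coeff_zsub, mul_sub]
  · intro i hi j hj hij
    rw [sub_eq_zero, Zv_mul_Qv_sq_pow]
    exact coeff_Zv_pow_mul_Qv_pow_mul_zsub_congr hij _ _ _
      fun l' hl' => hlow l' hl' _ _ _ (by omega)

lemma coeff_eq_of_forall_lt (hF : SatisfiesD3System k F) (hG : SatisfiesD3System k G)
    (hl : l ≠ 0)
    (hlow : ∀ l' < l, ∀ i m j, i + m + j = k → coeff l' (F i m j) = coeff l' (G i m j))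
    {k₀ k₁ k₂ : ℕ} (hs : k₀ + k₁ + k₂ = k) : coeff l (F k₀ k₁ k₂) = coeff l (G k₀ k₁ k₂) := by
  set D : ℕ → ℕ → ℕ → PowerSeries ℚ := fun i m j => coeff l (F i m j) - coeff l (G i m j)
  have hchain : ∀ {i m j}, i + m + j = k → D i m j = D (k - j) 0 j :=
    apply_eq_apply_of_shift_invariant k D fun a b hab => coeff_sub_coeff_shift hF hG hlow hab
  have hboundary : ∀ a ≤ k, D a 0 (k - a) = X ^ (2 * l) * D 0 k 0 :=
    fun a ha => coeff_sub_coeff_boundary hF hG hlow ha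
  have hcorner : D 0 k 0 = 0 := by
    refine eq_zero_of_eq_X_pow_mul (by omega : 2 * l ≠ 0) ?_
    calc D 0 k 0 = D k 0 0 := by simpa using hchain (i := 0) (m := k) (j := 0) (by omega)
      _ = X ^ (2 * l) * D 0 k 0 := by simpa using hboundary k le_rfl
  have hD : D k₀ k₁ k₂ = 0 := by
    have h := hboundary (k - k₂) (by omega)
    rw [Nat.sub_sub_self (by omega)] at h
    rw [hchain hs, h, hcorner, mul_zero]
  exact sub_eq_zero.mp hD

end InductionStep

theorem D3_system_unique_solution_general (k : ℕ)
    (F G : ℕ → ℕ → ℕ → PowerSeries (PowerSeries ℚ))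
    (hF : SatisfiesD3System k F) (hG : SatisfiesD3System k G) :
    ∀ k₀ k₁ k₂ : ℕ, k₀ + k₁ + k₂ = k → F k₀ k₁ k₂ = G k₀ k₁ k₂ := by
  suffices h : ∀ l k₀ k₁ k₂, k₀ + k₁ + k₂ = k → coeff l (F k₀ k₁ k₂) = coeff l (G k₀ k₁ k₂) from
    fun k₀ k₁ k₂ hs => PowerSeries.ext fun l => h l k₀ k₁ k₂ hs
  intro l
  induction l using Nat.strong_induction_on with
  | _ l ih =>
    intro k₀ k₁ k₂ hs
    rcases Nat.eq_zero_or_pos l with rfl | hl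
    · rw [hF.2.2.2 _ _ _ hs, hG.2.2.2 _ _ _ hs]
    · exact coeff_eq_of_forall_lt hF hG hl.ne' ih hs

/-- Lemma 4.6: for `k ≥ 1`, the functional equations (4.8) and (4.9), together with the
symmetry relation (4.6a) and the initial conditions `H(0,q) = 1`, uniquely determine the
family of two-variable series indexed by level-`2k` dominant integral weights of
`D₃⁽²⁾`: any two families satisfying the system coincide. -/
theorem D3_system_unique_solution (k : ℕ) (hk : 1 ≤ k)
    (F G : ℕ → ℕ → ℕ → PowerSeries (PowerSeries ℚ))
    (hF : SatisfiesD3System k F) (hG : SatisfiesD3System k G) :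
    ∀ k₀ k₁ k₂ : ℕ, k₀ + k₁ + k₂ = k → F k₀ k₁ k₂ = G k₀ k₁ k₂ :=
  D3_system_unique_solution_general k F G hF hG
end
end

section
/- The following identity of formal power series in z and q holds, where both sums are over r_1, r_2, s_1, s_2 ≥ 0 with r_3 := 0, s_0 := 0, and 1/(q;q)_m := 0 and 1/(q²;q²)_m := 0 for m < 0: Σ ∏_{i=1}^{2} [z^{r_i+s_i} q^{(r_i+s_i)²+s_i²+δ_{i,2}(r_i+2s_i)} / ((q;q)_{r_i−r_{i+1}} (q²;q²)_{s_i−s_{i−1}})] · (1 + z q^{2+r_1+r_2+2s_1+2s_2}) = Σ ∏_{i=1}^{2} [z^{r_i+s_i} q^{(r_i+s_i)²+s_i²} / ((q;q)_{r_i−r_{i+1}} (q²;q²)_{s_i−s_{i−1}})] · (q^{r_2+2s_2} + q^{r_1+2s_1}(1 − q^{2s_2−2s_1})). -/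
noncomputable section

/-- The product topology on power series (coefficientwise convergence). -/
instance (R : Type*) [TopologicalSpace R] : TopologicalSpace (PowerSeries R) :=
  inferInstanceAs (TopologicalSpace ((Unit →₀ ℕ) → R))

/-- `1/(q^b; q^b)_m` as a power series in `q`, with the convention that it is `0`
for `m < 0`.  Here `(q^b; q^b)_m = ∏_{i=0}^{m-1} (1 - q^{b(i+1)})`. -/
def pinv (b : ℕ) (m : ℤ) : PowerSeries ℚ :=
  if m < 0 then 0
  else (∏ i ∈ Finset.range m.toNat, (1 - (PowerSeries.X : PowerSeries ℚ) ^ (b * (i + 1))))⁻¹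

/-- The inclusion of `q`-series into two-variable series (`z` outer, `q` inner). -/
def Cq : PowerSeries ℚ →+* PowerSeries (PowerSeries ℚ) := PowerSeries.C

/-- The common factor
`z^{r₁+s₁+r₂+s₂} / ((q;q)_{r₁−r₂} (q;q)_{r₂} (q²;q²)_{s₁} (q²;q²)_{s₂−s₁})`
of the Andrews–Gordon-type multisums (with `r₃ = s₀ = 0`). -/
def agBase (r₁ r₂ s₁ s₂ : ℕ) : PowerSeries (PowerSeries ℚ) :=
  Zv ^ (r₁ + s₁ + r₂ + s₂) *
    Cq (pinv 1 ((r₁ : ℤ) - r₂) * pinv 1 (r₂ : ℤ) * pinv 2 (s₁ : ℤ) * pinv 2 ((s₂ : ℤ) - s₁))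

/-!
With `E = (r₁+s₁)² + s₁² + (r₂+s₂)² + s₂²`, both summands split as a common part
`agBase · q^{E + r₂ + 2s₂}` plus a remainder. Since
`(1 - q^{2(s₂+1-s₁)}) / (q²;q²)_{s₂+1-s₁} = 1 / (q²;q²)_{s₂-s₁}`, the left remainder
`z q^{2+r₁+r₂+2s₁+2s₂} · agBase · q^{E + r₂ + 2s₂}` is the right remainder
`agBase · q^{E + r₁ + 2s₁} (1 - q^{2s₂-2s₁})` at `s₂ + 1` (both vanish when `s₂ < s₁`), and the
right remainder vanishes at `s₂ = 0`; so shifting `s₂` identifies the two remainder sums.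
Every sum converges because `agBase r₁ r₂ s₁ s₂` is divisible by `z^{r₁+r₂+s₁+s₂}`.
-/

instance (R : Type*) [TopologicalSpace R] [T2Space R] : T2Space (PowerSeries R) :=
  inferInstanceAs (T2Space ((Unit →₀ ℕ) → R))

instance (R : Type*) [Semiring R] [TopologicalSpace R] [ContinuousAdd R] :
    ContinuousAdd (PowerSeries R) :=
  inferInstanceAs (ContinuousAdd ((Unit →₀ ℕ) → R))

open PowerSeries

theorem summable_of_X_pow_dvd {R ι : Type*} [Semiring R] [TopologicalSpace R]
    {f : ι → PowerSeries R} (d : ι → ℕ) (hd : ∀ n, {i | d i ≤ n}.Finite)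
    (hf : ∀ i, X ^ d i ∣ f i) : Summable f := by
  refine (WithPiTopology.summable_iff_summable_coeff R).mpr fun n =>
    summable_of_hasFiniteSupport ((hd n).subset fun i hi => ?_)
  by_contra h
  exact hi (X_pow_dvd_iff.mp (hf i) n (by simpa using h))

theorem summable_of_agBase_dvd {f : ℕ × ℕ × ℕ × ℕ → PowerSeries (PowerSeries ℚ)}
    (hf : ∀ t, agBase t.1 t.2.1 t.2.2.1 t.2.2.2 ∣ f t) : Summable f := by
  refine summable_of_X_pow_dvd (fun t => t.1 + t.2.2.1 + t.2.1 + t.2.2.2)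
    (fun n => (Set.finite_Iic (n, n, n, n)).subset fun t (ht : _ ≤ n) => ?_)
    (fun t => (dvd_mul_right _ _).trans (hf t))
  simp only [Set.mem_Iic, Prod.le_def]
  omega

theorem pinv_of_neg (b : ℕ) {m : ℤ} (h : m < 0) : pinv b m = 0 := if_pos h

theorem pinv_natCast (b m : ℕ) :
    pinv b m = (∏ i ∈ Finset.range m, (1 - (X : PowerSeries ℚ) ^ (b * (i + 1))))⁻¹ := by
  simp [pinv]

theorem pinv_succ_mul {b : ℕ} (hb : 0 < b) (m : ℕ) :
    pinv b (m + 1) * (1 - X ^ (b * (m + 1))) = pinv b m := by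
  have hunit : constantCoeff (1 - (X : PowerSeries ℚ) ^ (b * (m + 1))) ≠ 0 := by
    simp [zero_pow (Nat.mul_ne_zero hb.ne' m.succ_ne_zero)]
  rw [← Nat.cast_succ, pinv_natCast, pinv_natCast, Finset.prod_range_succ, PowerSeries.mul_inv_rev,
    mul_right_comm, PowerSeries.inv_mul_cancel _ hunit, one_mul]

theorem agBase_eq_zero_of_lt {r₁ r₂ s₁ s₂ : ℕ} (h : s₂ < s₁) : agBase r₁ r₂ s₁ s₂ = 0 := by
  simp [agBase, pinv_of_neg 2 (show (s₂ : ℤ) - s₁ < 0 by omega)]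

theorem agBase_succ_mul (r₁ r₂ s₁ s₂ : ℕ) :
    agBase r₁ r₂ s₁ (s₂ + 1) * (1 - Qv ^ (2 * (s₂ + 1) - 2 * s₁)) = Zv * agBase r₁ r₂ s₁ s₂ := by
  rcases lt_or_ge s₂ s₁ with h | h
  · simp [agBase_eq_zero_of_lt h, show 2 * (s₂ + 1) - 2 * s₁ = 0 by omega]
  obtain ⟨k, rfl⟩ := Nat.exists_eq_add_of_le h
  have hk : ((s₁ + k + 1 : ℕ) : ℤ) - s₁ = (k : ℕ) + 1 := by push_cast; ring
  have hq : 1 - Qv ^ (2 * (s₁ + k + 1) - 2 * s₁) = Cq (1 - X ^ (2 * (k + 1))) := by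
    rw [show 2 * (s₁ + k + 1) - 2 * s₁ = 2 * (k + 1) by omega]
    simp [Qv, Cq]
  rw [hq, agBase, agBase, hk, Nat.cast_add s₁ k, add_sub_cancel_left, mul_assoc, ← map_mul,
    mul_assoc _ (pinv 2 _), pinv_succ_mul two_pos]
  ring

def agExp (r₁ r₂ s₁ s₂ : ℕ) : ℕ := (r₁ + s₁) ^ 2 + s₁ ^ 2 + (r₂ + s₂) ^ 2 + s₂ ^ 2

def agTermA (r₁ r₂ s₁ s₂ : ℕ) : PowerSeries (PowerSeries ℚ) :=
  agBase r₁ r₂ s₁ s₂ * Qv ^ (agExp r₁ r₂ s₁ s₂ + r₂ + 2 * s₂)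

def agTermB (r₁ r₂ s₁ s₂ : ℕ) : PowerSeries (PowerSeries ℚ) :=
  agBase r₁ r₂ s₁ s₂ * Qv ^ (agExp r₁ r₂ s₁ s₂ + r₁ + 2 * s₁) * (1 - Qv ^ (2 * s₂ - 2 * s₁))

theorem agTermB_zero (r₁ r₂ s₁ : ℕ) : agTermB r₁ r₂ s₁ 0 = 0 := by
  simp [agTermB]

theorem agTermA_mul_eq_agTermB_succ (r₁ r₂ s₁ s₂ : ℕ) :
    agTermA r₁ r₂ s₁ s₂ * (Zv * Qv ^ (2 + r₁ + r₂ + 2 * s₁ + 2 * s₂)) =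
      agTermB r₁ r₂ s₁ (s₂ + 1) := by
  simp only [agTermA, agTermB, agExp]
  linear_combination (-Qv ^ ((r₁ + s₁) ^ 2 + s₁ ^ 2 + (r₂ + (s₂ + 1)) ^ 2 + (s₂ + 1) ^ 2
    + r₁ + 2 * s₁)) * agBase_succ_mul r₁ r₂ s₁ s₂

theorem tsum_shift_last_of_eq_zero {M : Type*} [AddCommMonoid M] [TopologicalSpace M]
    (f : ℕ → ℕ → ℕ → ℕ → M) (hf : ∀ a b c, f a b c 0 = 0) :
    ∑' t : ℕ × ℕ × ℕ × ℕ, f t.1 t.2.1 t.2.2.1 (t.2.2.2 + 1) =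
      ∑' t : ℕ × ℕ × ℕ × ℕ, f t.1 t.2.1 t.2.2.1 t.2.2.2 := by
  refine Function.Injective.tsum_eq (f := fun t : ℕ × ℕ × ℕ × ℕ => f t.1 t.2.1 t.2.2.1 t.2.2.2)
    (g := fun t : ℕ × ℕ × ℕ × ℕ => (t.1, t.2.1, t.2.2.1, t.2.2.2 + 1)) ?_ ?_
  · rintro ⟨a, b, c, d⟩ ⟨a', b', c', d'⟩ h
    simp_all
  · rintro ⟨a, b, c, _ | d⟩ h
    · exact absurd (hf a b c) h
    · exact ⟨(a, b, c, d), rfl⟩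

/-- The two multisum expressions for `𝒟⁽²⁾_{Λ̂₀+Λ̂₁}(z,q)` agree: with all sums over
`r₁, r₂, s₁, s₂ ≥ 0` (and `r₃ = 0`, `s₀ = 0`),
`Σ ∏ᵢ [z^{rᵢ+sᵢ} q^{(rᵢ+sᵢ)²+sᵢ²+δ_{i,2}(rᵢ+2sᵢ)}/((q;q)_{rᵢ−rᵢ₊₁}(q²;q²)_{sᵢ−sᵢ₋₁})]
   (1 + z q^{2+r₁+r₂+2s₁+2s₂})
 = Σ ∏ᵢ [z^{rᵢ+sᵢ} q^{(rᵢ+sᵢ)²+sᵢ²}/((q;q)_{rᵢ−rᵢ₊₁}(q²;q²)_{sᵢ−sᵢ₋₁})]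
   (q^{r₂+2s₂} + q^{r₁+2s₁}(1 − q^{2s₂−2s₁}))`. -/
theorem D3_multisum_rewriting :
    (∑' t : ℕ × ℕ × ℕ × ℕ,
      agBase t.1 t.2.1 t.2.2.1 t.2.2.2 *
        Qv ^ ((t.1 + t.2.2.1) ^ 2 + t.2.2.1 ^ 2
          + (t.2.1 + t.2.2.2) ^ 2 + t.2.2.2 ^ 2 + t.2.1 + 2 * t.2.2.2) *
        (1 + Zv * Qv ^ (2 + t.1 + t.2.1 + 2 * t.2.2.1 + 2 * t.2.2.2))) =
    (∑' t : ℕ × ℕ × ℕ × ℕ,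
      agBase t.1 t.2.1 t.2.2.1 t.2.2.2 *
        Qv ^ ((t.1 + t.2.2.1) ^ 2 + t.2.2.1 ^ 2
          + (t.2.1 + t.2.2.2) ^ 2 + t.2.2.2 ^ 2) *
        (Qv ^ (t.2.1 + 2 * t.2.2.2) +
          Qv ^ (t.1 + 2 * t.2.2.1) * (1 - Qv ^ (2 * t.2.2.2 - 2 * t.2.2.1)))) := by
  have hA : Summable fun t : ℕ × ℕ × ℕ × ℕ => agTermA t.1 t.2.1 t.2.2.1 t.2.2.2 :=
    summable_of_agBase_dvd fun _ => dvd_mul_right _ _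
  calc _ = ∑' t : ℕ × ℕ × ℕ × ℕ, (agTermA t.1 t.2.1 t.2.2.1 t.2.2.2 +
          agTermA t.1 t.2.1 t.2.2.1 t.2.2.2 *
            (Zv * Qv ^ (2 + t.1 + t.2.1 + 2 * t.2.2.1 + 2 * t.2.2.2))) :=
        tsum_congr fun t => mul_one_add _ _
    _ = (∑' t : ℕ × ℕ × ℕ × ℕ, agTermA t.1 t.2.1 t.2.2.1 t.2.2.2) +
          ∑' t : ℕ × ℕ × ℕ × ℕ, agTermB t.1 t.2.1 t.2.2.1 t.2.2.2 := by
      rw [hA.tsum_add, ← tsum_shift_last_of_eq_zero agTermB agTermB_zero]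
      · simp only [agTermA_mul_eq_agTermB_succ]
      · exact summable_of_agBase_dvd fun _ => (dvd_mul_right _ _).mul_right _
    _ = _ := by
      rw [← hA.tsum_add]
      · exact tsum_congr fun t => by simp only [agTermA, agTermB, agExp]; ring
      · exact summable_of_agBase_dvd fun _ => (dvd_mul_right _ _).mul_right _
end
end

section
/- For all n ≥ 1 (type C) and n ≥ 2 (type D) and all nonnegative integers k_0, …, k_n, colour reversal c ↦ m+1−c (where m is the number of colours, m = 2n+1 for type C and m = 2n−1 for type D) gives a bijection from 𝒞_{k_0,…,k_n} onto 𝒞_{k_n,…,k_0}, respectively from 𝒟_{k_0,…,k_n} onto 𝒟_{k_n,…,k_0}, preserving |λ| and l(λ). Consequently 𝒞^{(n)}_{(k_0,…,k_n)}(z,q) = 𝒞^{(n)}_{(k_n,…,k_0)}(z,q) and 𝒟^{(n)}_{(k_0,…,k_n)}(z,q) = 𝒟^{(n)}_{(k_n,…,k_0)}(z,q). -/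
noncomputable section

/-- Colour reversal `c ↦ m + 1 - c` on an `m`-coloured partition given by its
multiplicity function. -/
def crev (m : ℕ) (f : ℕ × ℕ →₀ ℕ) : ℕ × ℕ →₀ ℕ :=
  Finsupp.mapDomain (fun p : ℕ × ℕ => (p.1, m + 1 - p.2)) f

/-!
Reversing colours `c ↦ m + 1 - c` reverses every path: if `p` is a path then so is
`j ↦ p (m - 1 - j)`, because `m` is odd and hence the parity condition on `p j + j` is
invariant under `j ↦ m - 1 - j`. The extended frequencies of the reversed partition, with
the reversed boundary data, read along a path are those of the original partition read
along the reversed path, so both carry the same weight, and `k₀ + ⋯ + kₙ` is unchanged.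
Colour reversal is an involution preserving `|λ|` and `l(λ)`, hence the generating
functions agree coefficientwise.
-/

section ColourReversal

variable {m : ℕ} {f : ℕ × ℕ →₀ ℕ}

theorem crev_apply (hf : ∀ p ∈ f.support, p.2 ≤ m) (i : ℕ) {c : ℕ} (hc₁ : 1 ≤ c)
    (hc₂ : c ≤ m) : crev m f (i, c) = f (i, m + 1 - c) := by
  have hic : (i, c) = (fun p : ℕ × ℕ => (p.1, m + 1 - p.2)) (i, m + 1 - c) := by
    simp only [Prod.mk.injEq, true_and]
    omega
  rw [crev, hic]
  refine Finsupp.mapDomain_apply' {p : ℕ × ℕ | p.2 ≤ m} f hf ?_ (show m + 1 - c ≤ m by omega)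
  rintro ⟨p₁, p₂⟩ hp ⟨q₁, q₂⟩ hq hpq
  simp only [Set.mem_ofPred_eq, Prod.mk.injEq] at hp hq hpq ⊢
  omega

theorem crev_crev (hf : ∀ p ∈ f.support, p.2 ≤ m) : crev m (crev m f) = f := by
  rw [crev, crev, ← Finsupp.mapDomain_comp]
  refine (Finsupp.mapDomain_congr fun p hp => ?_).trans Finsupp.mapDomain_id
  have := hf p hp
  ext <;> simp only [Function.comp_apply, id_eq]
  omega

variable (m f)

theorem wt_crev : wt (crev m f) = wt f :=
  Finsupp.sum_mapDomain_index (fun _ => mul_zero _) fun _ _ _ => mul_add _ _ _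

theorem len_crev : len (crev m f) = len f :=
  Finsupp.sum_mapDomain_index (fun _ => rfl) fun _ _ _ => rfl

end ColourReversal

/-- The path condition of `MemC` (with `r = 0`) and of `MemD` (with `r = 1`). -/
def PathBounded (L : ℕ) (r : ℤ) (F : ℤ → ℕ → ℕ) (K : ℕ) : Prop :=
  ∀ p : ℕ → ℤ,
    (∀ j < L, -1 ≤ p j ∧ (p j + (j : ℤ) + 1) % 2 = r) →
    (∀ j, j + 1 < L → |p (j + 1) - p j| = 1) →
    ∑ j ∈ Finset.range L, F (p j) (j + 1) ≤ K

theorem PathBounded.reflect {L : ℕ} (hL : Odd L) {r : ℤ} {F G : ℤ → ℕ → ℕ} {K : ℕ}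
    (hGF : ∀ i c, 1 ≤ c → c ≤ L → G i c = F i (L + 1 - c)) (h : PathBounded L r F K) :
    PathBounded L r G K := by
  intro p hp hstep
  obtain ⟨t, rfl⟩ := hL
  let q : ℕ → ℤ := fun j => p (2 * t - j)
  have hq : ∀ j < 2 * t + 1, -1 ≤ q j ∧ (q j + (j : ℤ) + 1) % 2 = r := by
    intro j hj
    obtain ⟨hle, hpar⟩ := hp (2 * t - j) (by omega)
    exact ⟨hle, by simp only [q]; omega⟩
  have hqstep : ∀ j, j + 1 < 2 * t + 1 → |q (j + 1) - q j| = 1 := by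
    intro j hj
    have h := hstep (2 * t - (j + 1)) (by omega)
    rwa [show 2 * t - (j + 1) + 1 = 2 * t - j by omega, abs_sub_comm] at h
  calc ∑ j ∈ Finset.range (2 * t + 1), G (p j) (j + 1)
      = ∑ j ∈ Finset.range (2 * t + 1), F (q (2 * t + 1 - 1 - j)) (2 * t + 1 - 1 - j + 1) := by
        refine Finset.sum_congr rfl fun j hj => ?_
        rw [Finset.mem_range] at hj
        rw [hGF _ _ (by omega) (by omega)]
        congr 2 <;> omega
    _ = ∑ j ∈ Finset.range (2 * t + 1), F (q j) (j + 1) :=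
        Finset.sum_range_reflect (fun j => F (q j) (j + 1)) _
    _ ≤ K := h q hq hqstep

theorem sum_range_eq_of_reverse {n : ℕ} {k k' : ℕ → ℕ} (hk : ∀ c ≤ n, k' c = k (n - c)) :
    ∑ c ∈ Finset.range (n + 1), k' c = ∑ c ∈ Finset.range (n + 1), k c := by
  rw [← Finset.sum_range_reflect k]
  exact Finset.sum_congr rfl fun c hc => by
    rw [hk c (by simpa [Nat.lt_succ_iff] using hc), add_tsub_cancel_right]

section TypeC

variable {n : ℕ} {k k' : ℕ → ℕ} {f : ℕ × ℕ →₀ ℕ}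

theorem IsCPC.colour_le (hf : IsCPC n f) : ∀ p ∈ f.support, p.2 ≤ 2 * n + 1 :=
  fun p hp => (hf p hp).2.2.1

theorem IsCPC.crev (hf : IsCPC n f) : IsCPC n (crev (2 * n + 1) f) := by
  intro q hq
  obtain ⟨p, hp, rfl⟩ := Finset.mem_image.mp (Finsupp.mapDomain_support hq)
  have := hf p hp
  exact ⟨this.1, by omega, by omega, by omega⟩

theorem fextC_crev (hf : IsCPC n f) (hk : ∀ c ≤ n, k' c = k (n - c)) (i : ℤ) {c : ℕ}
    (hc₁ : 1 ≤ c) (hc₂ : c ≤ 2 * n + 1) :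
    fextC k' (crev (2 * n + 1) f) i c = fextC k f i (2 * n + 1 + 1 - c) := by
  unfold fextC
  split_ifs
  all_goals first
    | omega
    | rfl
    | exact crev_apply hf.colour_le _ hc₁ hc₂
    | exact (hk _ (by omega)).trans (congrArg k (by omega))

theorem MemC.crev (hk : ∀ c ≤ n, k' c = k (n - c)) (hf : MemC n k f) :
    MemC n k' (crev (2 * n + 1) f) := by
  refine ⟨hf.1.crev, ?_⟩
  rw [sum_range_eq_of_reverse hk]
  exact PathBounded.reflect (odd_two_mul_add_one n)
    (fun i c hc₁ hc₂ => fextC_crev hf.1 hk i hc₁ hc₂) hf.2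

end TypeC

section TypeD

variable {n : ℕ} {k k' : ℕ → ℕ} {f : ℕ × ℕ →₀ ℕ}

theorem IsCPD.colour_le (hf : IsCPD n f) : ∀ p ∈ f.support, p.2 ≤ 2 * n - 1 :=
  fun p hp => (hf p hp).2.2.1

theorem IsCPD.crev (hf : IsCPD n f) : IsCPD n (crev (2 * n - 1) f) := by
  intro q hq
  obtain ⟨p, hp, rfl⟩ := Finset.mem_image.mp (Finsupp.mapDomain_support hq)
  have := hf p hp
  exact ⟨this.1, by omega, by omega, by omega⟩

/-- For `n = 1` the colours `1` and `2n - 1` coincide, and the boundary values `k₀` and `kₙ`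
at part `0` would clash. -/
theorem fextD_crev (hn : 2 ≤ n) (hf : IsCPD n f) (hk : ∀ c ≤ n, k' c = k (n - c)) (i : ℤ)
    {c : ℕ} (hc₁ : 1 ≤ c) (hc₂ : c ≤ 2 * n - 1) :
    fextD n k' (crev (2 * n - 1) f) i c = fextD n k f i (2 * n - 1 + 1 - c) := by
  unfold fextD
  split_ifs
  all_goals first
    | omega
    | rfl
    | exact crev_apply hf.colour_le _ hc₁ hc₂
    | exact (hk _ (by omega)).trans (congrArg k (by omega))

theorem MemD.crev (hn : 2 ≤ n) (hk : ∀ c ≤ n, k' c = k (n - c)) (hf : MemD n k f) :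
    MemD n k' (crev (2 * n - 1) f) := by
  refine ⟨hf.1.crev, ?_⟩
  rw [sum_range_eq_of_reverse hk]
  exact PathBounded.reflect ⟨n - 1, by omega⟩
    (fun i c hc₁ hc₂ => fextD_crev hn hf.1 hk i hc₁ hc₂) hf.2

end TypeD

theorem card_eq_of_crev {m : ℕ} {P Q : (ℕ × ℕ →₀ ℕ) → Prop}
    (hPQ : ∀ f, P f → Q (crev m f)) (hQP : ∀ f, Q f → P (crev m f))
    (hP : ∀ f, P f → ∀ p ∈ f.support, p.2 ≤ m) (hQ : ∀ f, Q f → ∀ p ∈ f.support, p.2 ≤ m)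
    (l N : ℕ) :
    Nat.card {f // P f ∧ len f = l ∧ wt f = N} = Nat.card {f // Q f ∧ len f = l ∧ wt f = N} :=
  Nat.card_congr <| Set.BijOn.equiv (crev m) <| Set.InvOn.bijOn
    ⟨fun f hf => crev_crev (hP f hf.1), fun f hf => crev_crev (hQ f hf.1)⟩
    (fun f ⟨hf, hl, hw⟩ => ⟨hPQ f hf, (len_crev m f).trans hl, (wt_crev m f).trans hw⟩)
    (fun f ⟨hf, hl, hw⟩ => ⟨hQP f hf, (len_crev m f).trans hl, (wt_crev m f).trans hw⟩)

theorem CGF_reverse (n : ℕ) (k : ℕ → ℕ) : CGF n k = CGF n (fun c => k (n - c)) := by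
  ext l N
  simp only [CGF, PowerSeries.coeff_mk]
  exact_mod_cast card_eq_of_crev (m := 2 * n + 1) (fun _ => MemC.crev fun _ _ => rfl)
    (fun _ => MemC.crev fun c hc => by rw [Nat.sub_sub_self hc]) (fun f hf => hf.1.colour_le)
    (fun f hf => hf.1.colour_le) l N

theorem DGF_reverse {n : ℕ} (hn : 2 ≤ n) (k : ℕ → ℕ) : DGF n k = DGF n (fun c => k (n - c)) := by
  ext l N
  simp only [DGF, PowerSeries.coeff_mk]
  exact_mod_cast card_eq_of_crev (m := 2 * n - 1) (fun _ => MemD.crev hn fun _ _ => rfl)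
    (fun _ => MemD.crev hn fun c hc => by rw [Nat.sub_sub_self hc]) (fun f hf => hf.1.colour_le)
    (fun f hf => hf.1.colour_le) l N

/-- Equation (4.6): for all `n ≥ 1` (type `C`, with `m = 2n+1` colours) and all `n ≥ 2`
(type `D`, with `m = 2n−1` colours) and all boundary data `k₀, …, kₙ`, colour reversal
`c ↦ m+1−c` maps `𝒞_{k₀,…,kₙ}` onto `𝒞_{kₙ,…,k₀}` (resp. `𝒟_{k₀,…,kₙ}` onto
`𝒟_{kₙ,…,k₀}`) bijectively (it is an involution), preserving weight and length;
consequently the generating functions satisfy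
`𝒞⁽ⁿ⁾_{(k₀,…,kₙ)}(z,q) = 𝒞⁽ⁿ⁾_{(kₙ,…,k₀)}(z,q)` and
`𝒟⁽ⁿ⁾_{(k₀,…,kₙ)}(z,q) = 𝒟⁽ⁿ⁾_{(kₙ,…,k₀)}(z,q)`. -/
theorem colour_reversal_symmetry :
    (∀ n : ℕ, 1 ≤ n → ∀ k : ℕ → ℕ,
      (∀ f : ℕ × ℕ →₀ ℕ, MemC n k f →
        MemC n (fun c => k (n - c)) (crev (2 * n + 1) f) ∧
          wt (crev (2 * n + 1) f) = wt f ∧ len (crev (2 * n + 1) f) = len f ∧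
          crev (2 * n + 1) (crev (2 * n + 1) f) = f) ∧
      CGF n k = CGF n (fun c => k (n - c))) ∧
    (∀ n : ℕ, 2 ≤ n → ∀ k : ℕ → ℕ,
      (∀ f : ℕ × ℕ →₀ ℕ, MemD n k f →
        MemD n (fun c => k (n - c)) (crev (2 * n - 1) f) ∧
          wt (crev (2 * n - 1) f) = wt f ∧ len (crev (2 * n - 1) f) = len f ∧
          crev (2 * n - 1) (crev (2 * n - 1) f) = f) ∧
      DGF n k = DGF n (fun c => k (n - c))) := by
  refine ⟨fun n _ k => ⟨fun f hf => ?_, CGF_reverse n k⟩,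
    fun n hn k => ⟨fun f hf => ?_, DGF_reverse hn k⟩⟩
  · exact ⟨MemC.crev (fun _ _ => rfl) hf, wt_crev _ f, len_crev _ f,
      crev_crev hf.1.colour_le⟩
  · exact ⟨MemD.crev hn (fun _ _ => rfl) hf, wt_crev _ f, len_crev _ f,
      crev_crev hf.1.colour_le⟩
end
end
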